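/- arXiv:0906.0763 — 7 statements merged into one kernel-verified Lean document; each statement's English description precedes it below -/
import Mathlib

section
/- A simplicial complex Γ is flag if and only if its 1-girth gr_1(Γ) is at least 4, where gr_1(Γ) is computed with coefficients in any fixed field k. -/
open Finset

/-- An (abstract) simplicial complex on vertex type `V`: a collection of finite
subsets of `V` (the faces) closed under taking subsets. -/
structure SC (V : Type*) where
  faces : Set (Finset V)
  down_closed : ∀ {F G : Finset V}, F ∈ faces → G ⊆ F → G ∈ faces

namespace SC

variable {V : Type*} [LinearOrder V]

/-- The vertex set of a simplicial complex. -/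
def vertexSet (K : SC V) : Set V := {v | {v} ∈ K.faces}

/-- The induced subcomplex `K[W]` on a set `W` of vertices. -/
def restrict (K : SC V) (W : Set V) : SC V where
  faces := {F | F ∈ K.faces ∧ ↑F ⊆ W}
  down_closed := fun hF hGF =>
    ⟨K.down_closed hF.1 hGF, Set.Subset.trans (Finset.coe_subset.mpr hGF) hF.2⟩

/-- The link `lk_K(F)` of a face `F`: all `G` disjoint from `F` with `F ∪ G ∈ K`. -/
def link (K : SC V) (F : Finset V) : SC V where
  faces := {G | Disjoint F G ∧ F ∪ G ∈ K.faces}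
  down_closed := fun hG hHG =>
    ⟨hG.1.mono_right (Finset.le_iff_subset.mpr hHG),
      K.down_closed hG.2 (Finset.union_subset_union_right hHG)⟩

/-- A complex is flag if every set all of whose subsets of cardinality at most 2
are faces is itself a face (equivalently, all minimal non-faces have two vertices). -/
def Flag (K : SC V) : Prop :=
  ∀ F : Finset V, (∀ G ⊆ F, G.card ≤ 2 → G ∈ K.faces) → F ∈ K.faces

/-- The faces of `K` with exactly `n` vertices (i.e. of dimension `n-1`). -/
def faceSet (K : SC V) (n : ℕ) : Set (Finset V) := {F | F ∈ K.faces ∧ F.card = n}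

variable (k : Type*) [Field k]

/-- Simplicial `(n-1)`-chains with coefficients in `k`: formal `k`-linear
combinations of faces with `n` vertices.  (`n = 0` corresponds to the empty face,
used for *reduced* homology.) -/
abbrev Chains (K : SC V) (n : ℕ) := (faceSet K n) →₀ k

/-- The boundary of a single face, with the usual signs determined by the
linear order on the vertices. -/
noncomputable def bdFace (K : SC V) (n : ℕ) (F : faceSet K (n + 1)) : Chains k K n :=
  ∑ v ∈ (F : Finset V).attach,
    ((-1 : k) ^ (((F : Finset V).filter (fun x => x < (v : V))).card)) •
      Finsupp.single (⟨(F : Finset V).erase v,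
        K.down_closed F.2.1 (Finset.erase_subset _ _),
        by rw [Finset.card_erase_of_mem v.2, F.2.2]; rfl⟩ : faceSet K n) 1

/-- The simplicial boundary map. -/
noncomputable def bd (K : SC V) (n : ℕ) : Chains k K (n + 1) →ₗ[k] Chains k K n :=
  Finsupp.lsum k fun F => LinearMap.toSpanSingleton k _ (bdFace k K n F)

/-- The reduced cycles in degree `n - 1` (chains supported on faces with `n` vertices). -/
noncomputable def cycles (K : SC V) : (n : ℕ) → Submodule k (Chains k K n)
  | 0 => ⊤
  | (m + 1) => LinearMap.ker (bd k K m)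

/-- The boundaries in degree `n - 1`. -/
noncomputable def boundaries (K : SC V) (n : ℕ) : Submodule k (Chains k K n) :=
  LinearMap.range (bd k K n)

/-- `HNonzero k K n` says that the reduced simplicial homology `H̃_{n-1}(K; k)`
is nonzero: some reduced cycle on faces with `n` vertices is not a boundary. -/
def HNonzero (K : SC V) (n : ℕ) : Prop := ¬ (cycles k K n ≤ boundaries k K n)

/-- The dimension of the reduced homology `H̃_{n-1}(K; k)` as a `k`-vector space
(for finite complexes): `dim (cycles) - dim (boundaries ∩ cycles)`. -/
noncomputable def homDim (K : SC V) (n : ℕ) : ℕ :=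
  Module.finrank k ↥(cycles k K n) -
    Module.finrank k ↥(boundaries k K n ⊓ cycles k K n)

/-- `girth k K p` is the `(p-1)`-girth `gr_{p-1}(K)` over the field `k`: the least
cardinality of a vertex set `W` such that `H̃_{p-1}(lk_K(F)[W]; k) ≠ 0` for some
face `F` of `K` (including the empty face), or `∞` if there is no such `W`. -/
noncomputable def girth (K : SC V) (p : ℕ) : ℕ∞ :=
  sInf ((fun W : Finset V => (W.card : ℕ∞)) ''
    {W : Finset V | ∃ F ∈ K.faces, HNonzero k ((K.link F).restrict ↑W) p})

/-- A non-returning walk of length `len` in the directed 1-skeleton of `K`: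
consecutive vertices span edges, and no three consecutive vertices return
(`v_i ≠ v_{i+2}`) or span a 2-face of `K`. -/
def IsNRWalk (K : SC V) (len : ℕ) (w : ℕ → V) : Prop :=
  (∀ i < len, w i ≠ w (i + 1) ∧ ({w i, w (i + 1)} : Finset V) ∈ K.faces) ∧
  (∀ i, i + 2 ≤ len → w i ≠ w (i + 2) ∧ ({w i, w (i + 1), w (i + 2)} : Finset V) ∉ K.faces)

end SC
section Aux

open SC

variable {V : Type*} [LinearOrder V] (k : Type*) [Field k]

open scoped Classical in
/-- The chain given by a single face (or `0` if the set is not a face). -/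
noncomputable def sf (K : SC V) (n : ℕ) (S : Finset V) : SC.Chains k K n :=
  if h : S ∈ SC.faceSet K n then Finsupp.single (⟨S, h⟩ : SC.faceSet K n) 1 else 0

lemma sf_apply (K : SC V) (n : ℕ) (S : Finset V) (G : SC.faceSet K n) :
    sf k K n S G = if (G : Finset V) = S then 1 else 0 := by
  unfold sf
  split_ifs with h h2 h2
  · rw [Finsupp.single_apply, if_pos (Subtype.ext h2.symm)]
  · rw [Finsupp.single_apply, if_neg fun he => h2 (congrArg Subtype.val he).symm]
  · exact absurd (h2 ▸ G.2) h
  · rfl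

lemma bdFace_eq (K : SC V) (n : ℕ) (F : SC.faceSet K (n + 1)) :
    SC.bdFace k K n F = ∑ v ∈ (F : Finset V),
      ((-1 : k) ^ (((F : Finset V).filter (fun x => x < v)).card)) •
        sf k K n ((F : Finset V).erase v) := by
  rw [SC.bdFace, ← Finset.sum_attach ((F : Finset V)) (fun v =>
    ((-1 : k) ^ (((F : Finset V).filter (fun x => x < v)).card)) •
      sf k K n ((F : Finset V).erase v))]
  refine Finset.sum_congr rfl fun v _ => ?_
  have hm : ((F : Finset V).erase ↑v) ∈ SC.faceSet K n :=
    ⟨K.down_closed F.2.1 (Finset.erase_subset _ _),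
      by simp [Finset.card_erase_of_mem v.2, F.2.2]⟩
  unfold sf
  rw [dif_pos hm]

lemma bdFace_pair (K : SC V) {p q : V} (hpq : p < q) (f : SC.faceSet K 2)
    (hf : (f : Finset V) = {p, q}) :
    SC.bdFace k K 1 f = sf k K 1 {q} - sf k K 1 {p} := by
  have hne : p ≠ q := hpq.ne
  rw [bdFace_eq, hf, show ({p, q} : Finset V) = insert p {q} from rfl,
    Finset.sum_insert (by simp [hne]), Finset.sum_singleton,
    Finset.erase_insert (by simp [hne]), Finset.erase_insert_of_ne hne,
    Finset.erase_singleton]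
  simp only [Finset.filter_insert, Finset.filter_singleton, lt_irrefl, if_false,
    hpq, if_true, hpq.asymm, Finset.insert_empty]
  rw [Finset.card_empty, Finset.card_singleton]
  simp only [pow_zero, pow_one, one_smul, neg_smul]
  abel

lemma bdFace_triple (K : SC V) {a b c : V} (hab : a < b) (hbc : b < c)
    (f : SC.faceSet K 3) (hf : (f : Finset V) = {a, b, c}) :
    SC.bdFace k K 2 f = sf k K 2 {b, c} - sf k K 2 {a, c} + sf k K 2 {a, b} := by
  have hac : a < c := hab.trans hbc
  rw [bdFace_eq, hf, show ({a, b, c} : Finset V) = insert a (insert b {c}) from rfl,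
    Finset.sum_insert (by simp [hab.ne, hac.ne]),
    Finset.sum_insert (by simp [hbc.ne]), Finset.sum_singleton,
    Finset.erase_insert (by simp [hab.ne, hac.ne]),
    Finset.erase_insert_of_ne hab.ne, Finset.erase_insert (by simp [hbc.ne]),
    Finset.erase_insert_of_ne hac.ne, Finset.erase_insert_of_ne hbc.ne,
    Finset.erase_singleton]
  simp only [Finset.filter_insert, Finset.filter_singleton, lt_irrefl, if_false,
    hab, hbc, hac, if_true, hab.asymm, hbc.asymm, hac.asymm, Finset.insert_empty]
  rw [Finset.card_empty, Finset.card_singleton, Finset.card_pair hab.ne]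
  simp only [pow_zero, pow_one, one_smul, neg_smul]
  norm_num
  abel

end Aux
section Aux2

open SC

variable {V : Type*} [LinearOrder V] (k : Type*) [Field k]

lemma bd_apply_point (K : SC V) (n : ℕ) (z : SC.Chains k K (n + 1)) (G : SC.faceSet K n) :
    SC.bd k K n z G = z.sum fun f c => c * (SC.bdFace k K n f G) := by
  rw [SC.bd, Finsupp.lsum_apply, Finsupp.sum_apply]
  refine Finsupp.sum_congr fun f _ => ?_
  rw [LinearMap.toSpanSingleton_apply, Finsupp.smul_apply, smul_eq_mul]

lemma bd_single (K : SC V) (n : ℕ) (f : SC.faceSet K (n + 1)) (x : k) :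
    SC.bd k K n (Finsupp.single f x) = x • SC.bdFace k K n f := by
  rw [SC.bd, Finsupp.lsum_single, LinearMap.toSpanSingleton_apply]

lemma cycles_two (K : SC V) : SC.cycles k K 2 = LinearMap.ker (SC.bd k K 1) := rfl

open scoped Classical in
/-- The coefficient of a chain at a given finset. -/
noncomputable def cf (K : SC V) (n : ℕ) (z : SC.Chains k K n) (S : Finset V) : k :=
  if h : S ∈ SC.faceSet K n then z ⟨S, h⟩ else 0

lemma cf_apply (K : SC V) (n : ℕ) (z : SC.Chains k K n) (G : SC.faceSet K n) :
    cf k K n z (G : Finset V) = z G := by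
  rw [cf, dif_pos G.2]

lemma cf_ne_zero (K : SC V) (n : ℕ) (z : SC.Chains k K n) (S : Finset V)
    (h : cf k K n z S ≠ 0) : S ∈ SC.faceSet K n := by
  by_contra h'
  rw [cf, dif_neg h'] at h
  exact h rfl

lemma sum_ite_cf (K : SC V) (n : ℕ) (z : SC.Chains k K n) (S : Finset V)
    (r : k → k) (hr : r 0 = 0) :
    (z.sum fun f c => if (f : Finset V) = S then r c else 0) = r (cf k K n z S) := by
  rw [cf]
  split_ifs with h
  · have he : ∀ f : SC.faceSet K n, ((f : Finset V) = S) = (f = ⟨S, h⟩) := fun f => by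
      simp [Subtype.ext_iff]
    simp_rw [he]
    rw [Finsupp.sum_ite_eq']
    split_ifs with hs
    · rfl
    · rw [Finsupp.notMem_support_iff.mp hs, hr]
  · rw [hr, Finsupp.sum]
    apply Finset.sum_eq_zero
    intro f _
    exact if_neg fun hfS => h (by rw [← hfS]; exact f.2)

lemma pair_eq_cases {S : Finset V} {a b c : V} (hab : a ≠ b) (hac : a ≠ c) (hbc : b ≠ c)
    (hS : S ⊆ {a, b, c}) (h2 : S.card = 2) :
    S = {a, b} ∨ S = {a, c} ∨ S = {b, c} := by
  obtain ⟨p, q, hpq, rfl⟩ := Finset.card_eq_two.mp h2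
  have hp := hS (Finset.mem_insert_self p {q})
  have hq := hS (Finset.mem_insert_of_mem (Finset.mem_singleton_self q))
  simp only [Finset.mem_insert, Finset.mem_singleton] at hp hq
  rcases hp with rfl | rfl | rfl <;> rcases hq with rfl | rfl | rfl <;>
    first
      | exact absurd rfl hpq
      | exact Or.inl rfl
      | exact Or.inr (Or.inl rfl)
      | exact Or.inr (Or.inr rfl)
      | exact Or.inl (Finset.pair_comm _ _)
      | exact Or.inr (Or.inl (Finset.pair_comm _ _))
      | exact Or.inr (Or.inr (Finset.pair_comm _ _))

lemma subset_pair_cases {S : Finset V} {a b c : V} (hab : a ≠ b) (hac : a ≠ c) (hbc : b ≠ c)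
    (hS : S ⊆ {a, b, c}) (h2 : S.card ≤ 2) :
    S ⊆ {a, b} ∨ S ⊆ {a, c} ∨ S ⊆ {b, c} := by
  by_contra h
  push_neg at h
  obtain ⟨h1, h2', h3⟩ := h
  obtain ⟨x, hxS, hx⟩ := Finset.not_subset.mp h1
  obtain ⟨y, hyS, hy⟩ := Finset.not_subset.mp h2'
  obtain ⟨z, hzS, hz⟩ := Finset.not_subset.mp h3
  have hx3 := hS hxS; have hy3 := hS hyS; have hz3 := hS hzS
  simp only [Finset.mem_insert, Finset.mem_singleton] at hx3 hy3 hz3 hx hy hz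
  push_neg at hx hy hz
  have hcS : c ∈ S := by rcases hx3 with rfl | rfl | rfl <;> tauto
  have hbS : b ∈ S := by rcases hy3 with rfl | rfl | rfl <;> tauto
  have haS : a ∈ S := by rcases hz3 with rfl | rfl | rfl <;> tauto
  have hsub : ({a, b, c} : Finset V) ⊆ S := by
    intro t ht
    simp only [Finset.mem_insert, Finset.mem_singleton] at ht
    rcases ht with rfl | rfl | rfl <;> assumption
  have := Finset.card_le_card hsub
  rw [Finset.card_eq_three.mpr ⟨a, b, c, hab, hac, hbc, rfl⟩] at this
  omega

lemma flag_restrict {K : SC V} (hK : K.Flag) (W : Set V) : (K.restrict W).Flag := by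
  intro F hF
  refine ⟨hK F fun G hG hc => (hF G hG hc).1, ?_⟩
  intro v hv
  exact (hF {v} (Finset.singleton_subset_iff.mpr (Finset.mem_coe.mp hv)) (by simp)).2 (by simp)

lemma flag_link {K : SC V} (hK : K.Flag) (F : Finset V) : (K.link F).Flag := by
  intro G hG
  constructor
  · rw [Finset.disjoint_right]
    intro v hvG hvF
    have := (hG {v} (Finset.singleton_subset_iff.mpr hvG) (by simp)).1
    rw [Finset.disjoint_singleton_right] at this
    exact this hvF
  · apply hK
    intro H hH hc
    have h2 := (hG (H ∩ G) Finset.inter_subset_right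
      (le_trans (Finset.card_le_card Finset.inter_subset_left) hc)).2
    refine K.down_closed h2 ?_
    intro x hx
    rcases Finset.mem_union.mp (hH hx) with h | h
    · exact Finset.mem_union.mpr (Or.inl h)
    · exact Finset.mem_union.mpr (Or.inr (Finset.mem_inter.mpr ⟨hx, h⟩))

end Aux2
section Aux3

open SC

variable {V : Type*} [LinearOrder V] (k : Type*) [Field k]

lemma case3 (L : SC V) (hfl : L.Flag) {a b c : V} (hab : a < b) (hbc : b < c)
    (hsub : ∀ F ∈ L.faces, F ⊆ ({a, b, c} : Finset V))
    (z : SC.Chains k L 2) (hz : SC.bd k L 1 z = 0) : z ∈ SC.boundaries k L 2 := by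
  have hac : a < c := hab.trans hbc
  have hab' : a ≠ b := hab.ne
  have hac' : a ≠ c := hac.ne
  have hbc' : b ≠ c := hbc.ne
  have hne1 : ({a, b} : Finset V) ≠ {a, c} := by
    intro h
    have hb : b ∈ ({a, c} : Finset V) := h ▸ (Finset.mem_insert_of_mem (Finset.mem_singleton_self b))
    rcases Finset.mem_insert.mp hb with h' | h'
    · exact hab' h'.symm
    · exact hbc' (Finset.mem_singleton.mp h')
  have hne2 : ({a, b} : Finset V) ≠ {b, c} := by
    intro h
    have ha : a ∈ ({b, c} : Finset V) := h ▸ Finset.mem_insert_self a {b}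
    rcases Finset.mem_insert.mp ha with h' | h'
    · exact hab' h'
    · exact hac' (Finset.mem_singleton.mp h')
  have hne3 : ({a, c} : Finset V) ≠ {b, c} := by
    intro h
    have ha : a ∈ ({b, c} : Finset V) := h ▸ Finset.mem_insert_self a {c}
    rcases Finset.mem_insert.mp ha with h' | h'
    · exact hab' h'
    · exact hac' (Finset.mem_singleton.mp h')
  have hclass : ∀ f : SC.faceSet L 2,
      (f : Finset V) = {a, b} ∨ (f : Finset V) = {a, c} ∨ (f : Finset V) = {b, c} :=
    fun f => pair_eq_cases hab' hac' hbc' (hsub _ f.2.1) f.2.2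
  set x := cf k L 2 z {a, b} with hxdef
  set y := cf k L 2 z {a, c} with hydef
  set w := cf k L 2 z {b, c} with hwdef
  -- the vertex equations
  have veq : ∀ u : V, {u} ∈ SC.faceSet L 1 →
      x * ((if u = b then (1 : k) else 0) - (if u = a then 1 else 0)) +
      (y * ((if u = c then (1 : k) else 0) - (if u = a then 1 else 0)) +
       w * ((if u = c then (1 : k) else 0) - (if u = b then 1 else 0))) = 0 := by
    intro u hu
    have h0 : SC.bd k L 1 z ⟨{u}, hu⟩ = 0 := by rw [hz]; rfl
    rw [bd_apply_point] at h0
    have hcong : (z.sum fun f cv => cv * (SC.bdFace k L 1 f ⟨{u}, hu⟩)) =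
        z.sum fun f cv =>
          (if (f : Finset V) = ({a, b} : Finset V) then
            cv * ((if u = b then (1 : k) else 0) - (if u = a then 1 else 0)) else 0) +
          ((if (f : Finset V) = ({a, c} : Finset V) then
            cv * ((if u = c then (1 : k) else 0) - (if u = a then 1 else 0)) else 0) +
          (if (f : Finset V) = ({b, c} : Finset V) then
            cv * ((if u = c then (1 : k) else 0) - (if u = b then 1 else 0)) else 0)) := by
      refine Finsupp.sum_congr fun f _ => ?_
      rcases hclass f with hf | hf | hf
      · have n1 : ¬((f : Finset V) = ({a, c} : Finset V)) := by rw [hf]; exact hne1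
        have n2 : ¬((f : Finset V) = ({b, c} : Finset V)) := by rw [hf]; exact hne2
        rw [bdFace_pair k L hab f hf, if_pos hf, if_neg n1, if_neg n2,
          Finsupp.sub_apply, sf_apply, sf_apply]
        simp [Finset.singleton_inj]
      · have n1 : ¬((f : Finset V) = ({a, b} : Finset V)) := by rw [hf]; exact Ne.symm hne1
        have n2 : ¬((f : Finset V) = ({b, c} : Finset V)) := by rw [hf]; exact hne3
        rw [bdFace_pair k L hac f hf, if_pos hf, if_neg n1, if_neg n2,
          Finsupp.sub_apply, sf_apply, sf_apply]
        simp [Finset.singleton_inj]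
      · have n1 : ¬((f : Finset V) = ({a, b} : Finset V)) := by rw [hf]; exact Ne.symm hne2
        have n2 : ¬((f : Finset V) = ({a, c} : Finset V)) := by rw [hf]; exact Ne.symm hne3
        rw [bdFace_pair k L hbc f hf, if_pos hf, if_neg n1, if_neg n2,
          Finsupp.sub_apply, sf_apply, sf_apply]
        simp [Finset.singleton_inj]
    rw [hcong, Finsupp.sum_add, Finsupp.sum_add,
      sum_ite_cf k L 2 z {a, b} (fun cv => cv * ((if u = b then (1 : k) else 0) - (if u = a then 1 else 0))) (zero_mul _),
      sum_ite_cf k L 2 z {a, c} (fun cv => cv * ((if u = c then (1 : k) else 0) - (if u = a then 1 else 0))) (zero_mul _),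
      sum_ite_cf k L 2 z {b, c} (fun cv => cv * ((if u = c then (1 : k) else 0) - (if u = b then 1 else 0))) (zero_mul _)] at h0
    exact h0
  -- reduce to the sign-normalised situation
  have main : x ≠ 0 → y = -x → w = x → z ∈ SC.boundaries k L 2 := by
    intro hx hy hw
    have hfab : ({a, b} : Finset V) ∈ SC.faceSet L 2 := cf_ne_zero k L 2 z _ hx
    have hfac : ({a, c} : Finset V) ∈ SC.faceSet L 2 :=
      cf_ne_zero k L 2 z _ (by rw [← hydef, hy]; exact neg_ne_zero.mpr hx)
    have hfbc : ({b, c} : Finset V) ∈ SC.faceSet L 2 :=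
      cf_ne_zero k L 2 z _ (by rw [← hwdef, hw]; exact hx)
    have hT : ({a, b, c} : Finset V) ∈ SC.faceSet L 3 := by
      refine ⟨hfl _ fun G hG hc => ?_, Finset.card_eq_three.mpr ⟨a, b, c, hab', hac', hbc', rfl⟩⟩
      rcases subset_pair_cases hab' hac' hbc' hG hc with h | h | h
      · exact L.down_closed hfab.1 h
      · exact L.down_closed hfac.1 h
      · exact L.down_closed hfbc.1 h
    refine ⟨Finsupp.single ⟨{a, b, c}, hT⟩ x, ?_⟩
    rw [bd_single, bdFace_triple k L hab hbc ⟨{a, b, c}, hT⟩ rfl]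
    ext G
    rw [Finsupp.smul_apply, Finsupp.add_apply, Finsupp.sub_apply, sf_apply, sf_apply, sf_apply]
    rcases hclass G with hG | hG | hG <;>
      rw [← cf_apply k L 2 z G, hG]
    · rw [if_neg hne2, if_neg hne1, if_pos rfl, ← hxdef]
      simp
    · rw [if_neg hne3, if_pos rfl, if_neg (Ne.symm hne1), ← hydef, hy]
      simp
    · rw [if_pos rfl, if_neg (Ne.symm hne3), if_neg (Ne.symm hne2), ← hwdef, hw]
      simp
  by_cases hz0 : z = 0
  · rw [hz0]; exact Submodule.zero_mem _
  obtain ⟨e, he⟩ := Finsupp.support_nonempty_iff.mpr hz0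
  have hez : z e ≠ 0 := Finsupp.mem_support_iff.mp he
  have hsing : ∀ u, u ∈ (e : Finset V) → {u} ∈ SC.faceSet L 1 := fun u hu =>
    ⟨L.down_closed e.2.1 (Finset.singleton_subset_iff.mpr hu), Finset.card_singleton u⟩
  rcases hclass e with hf | hf | hf
  · have hfa := hsing a (by rw [hf]; simp)
    have hfb := hsing b (by rw [hf]; simp)
    have hxe : x = z e := by rw [hxdef, ← hf, cf_apply]
    have eqa := veq a hfa
    have eqb := veq b hfb
    simp only [hab', hac', hbc', Ne.symm hab', Ne.symm hac', Ne.symm hbc', if_true, if_false,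
      eq_self_iff_true, ite_true, ite_false] at eqa eqb
    exact main (by rw [hxe]; exact hez) (by linear_combination -eqa) (by linear_combination -eqb)
  · have hfa := hsing a (by rw [hf]; simp)
    have hfc := hsing c (by rw [hf]; simp)
    have hye : y = z e := by rw [hydef, ← hf, cf_apply]
    have eqa := veq a hfa
    have eqc := veq c hfc
    simp only [hab', hac', hbc', Ne.symm hab', Ne.symm hac', Ne.symm hbc', if_true, if_false,
      eq_self_iff_true, ite_true, ite_false] at eqa eqc
    have hyne : y ≠ 0 := by rw [hye]; exact hez
    have hxv : x = -y := by linear_combination -eqa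
    exact main (by rw [hxv]; exact neg_ne_zero.mpr hyne) (by linear_combination -eqa)
      (by linear_combination eqc + eqa)
  · have hfb := hsing b (by rw [hf]; simp)
    have hfc := hsing c (by rw [hf]; simp)
    have hwe : w = z e := by rw [hwdef, ← hf, cf_apply]
    have eqb := veq b hfb
    have eqc := veq c hfc
    simp only [hab', hac', hbc', Ne.symm hab', Ne.symm hac', Ne.symm hbc', if_true, if_false,
      eq_self_iff_true, ite_true, ite_false] at eqb eqc
    have hwne : w ≠ 0 := by rw [hwe]; exact hez
    have hxw : x = w := by linear_combination eqb
    exact main (by rw [hxw]; exact hwne) (by linear_combination eqc + eqb)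
      (by linear_combination -eqb)

end Aux3
section Aux4

open SC

variable {V : Type*} [LinearOrder V] (k : Type*) [Field k]

lemma no_small_H (L : SC V) (hfl : L.Flag) (W : Finset V) (hW : W.card ≤ 3)
    (hsub : ∀ F ∈ L.faces, F ⊆ W) : SC.cycles k L 2 ≤ SC.boundaries k L 2 := by
  intro z hz
  rw [cycles_two, LinearMap.mem_ker] at hz
  by_cases hz0 : z = 0
  · rw [hz0]; exact Submodule.zero_mem _
  obtain ⟨e, he⟩ := Finsupp.support_nonempty_iff.mpr hz0
  have hesub : (e : Finset V) ⊆ W := hsub _ e.2.1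
  have h2W : 2 ≤ W.card := by
    have := Finset.card_le_card hesub
    rw [e.2.2] at this
    exact this
  rcases (by omega : W.card = 2 ∨ W.card = 3) with h23 | h23
  · exfalso
    obtain ⟨p, q, hpq, hepq⟩ : ∃ p q, p < q ∧ (e : Finset V) = {p, q} := by
      obtain ⟨p, q, hpq, hE⟩ := Finset.card_eq_two.mp e.2.2
      rcases hpq.lt_or_gt with h | h
      · exact ⟨p, q, h, hE⟩
      · exact ⟨q, p, h, hE.trans (Finset.pair_comm p q)⟩
    have hall : ∀ G : SC.faceSet L 2, G = e := by
      intro G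
      have h1 : (G : Finset V) = W :=
        Finset.eq_of_subset_of_card_le (hsub _ G.2.1) (by rw [G.2.2, h23])
      have h2 : (e : Finset V) = W :=
        Finset.eq_of_subset_of_card_le hesub (by rw [e.2.2, h23])
      exact Subtype.ext (h1.trans h2.symm)
    have hzs : z = Finsupp.single e (z e) := by
      ext G
      rw [hall G, Finsupp.single_eq_same]
    have hp1 : {p} ∈ SC.faceSet L 1 :=
      ⟨L.down_closed e.2.1 (by rw [hepq]; simp), Finset.card_singleton p⟩
    have h0 : SC.bd k L 1 z ⟨{p}, hp1⟩ = 0 := by rw [hz]; rfl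
    rw [hzs, bd_single, Finsupp.smul_apply, bdFace_pair k L hpq e hepq,
      Finsupp.sub_apply, sf_apply, sf_apply] at h0
    simp [Finset.singleton_inj, hpq.ne] at h0
    exact Finsupp.mem_support_iff.mp he h0
  · obtain ⟨p, q, r, hpq, hpr, hqr, hW'⟩ := Finset.card_eq_three.mp h23
    obtain ⟨a, b, c, h1, h2, hWabc⟩ : ∃ a b c : V, a < b ∧ b < c ∧ W = {a, b, c} := by
      have hperm : ∀ a b c : V, ({a, b, c} : Finset V) = {p, q, r} →
          W = {a, b, c} := by
        intro a b c h
        rw [hW', ← h]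
      rcases hpq.lt_or_gt with g1 | g1 <;> rcases hpr.lt_or_gt with g2 | g2 <;>
        rcases hqr.lt_or_gt with g3 | g3
      · exact ⟨p, q, r, g1, g3, hW'⟩
      · exact ⟨p, r, q, g2, g3, hperm _ _ _ (by ext t; simp; tauto)⟩
      · exact absurd (g1.trans (g3.trans g2)) (lt_irrefl p)
      · exact ⟨r, p, q, g2, g1, hperm _ _ _ (by ext t; simp; tauto)⟩
      · exact ⟨q, p, r, g1, g2, hperm _ _ _ (by ext t; simp; tauto)⟩
      · exact absurd (g2.trans (g3.trans g1)) (lt_irrefl p)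
      · exact ⟨q, r, p, g3, g2, hperm _ _ _ (by ext t; simp; tauto)⟩
      · exact ⟨r, q, p, g3, g1, hperm _ _ _ (by ext t; simp; tauto)⟩
    exact case3 k L hfl h1 h2 (fun F hF => hWabc ▸ hsub F hF) z hz

lemma forward_dir (K : SC V) (hK : K.Flag) : (4 : ℕ∞) ≤ SC.girth k K 2 := by
  rw [SC.girth]
  refine le_sInf ?_
  rintro m ⟨W, ⟨F, hF, hH⟩, rfl⟩
  by_contra hlt
  push_neg at hlt
  have hW3 : W.card ≤ 3 := by
    have h4 : ((W.card : ℕ∞)) < ((4 : ℕ) : ℕ∞) := by exact_mod_cast hlt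
    have := (Nat.cast_lt (α := ℕ∞)).mp h4
    omega
  exact hH (no_small_H k _ (flag_restrict (flag_link hK F) _) W hW3
    (fun Fa hFa => Finset.coe_subset.mp hFa.2))

end Aux4
section Aux5

open SC

variable {V : Type*} [LinearOrder V] (k : Type*) [Field k]

lemma back3 (K : SC V) (hg : (4 : ℕ∞) ≤ SC.girth k K 2) {F : Finset V}
    (hprop : ∀ G ⊂ F, G ∈ K.faces) (hF : F ∉ K.faces)
    {a b c : V} (hab : a < b) (hbc : b < c) (habc : ({a, b, c} : Finset V) ⊆ F) :
    False := by
  have hac : a < c := hab.trans hbc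
  have hab' : a ≠ b := hab.ne
  have hac' : a ≠ c := hac.ne
  have hbc' : b ≠ c := hbc.ne
  set G := F \ ({a, b, c} : Finset V) with hGdef
  have hGF : G ⊂ F := Finset.sdiff_ssubset habc (Finset.insert_nonempty a {b, c})
  have hGface : G ∈ K.faces := hprop G hGF
  set L := (K.link G).restrict ↑({a, b, c} : Finset V) with hLdef
  have hface : ∀ S : Finset V, S ⊂ ({a, b, c} : Finset V) → S ∈ L.faces := by
    intro S hS
    obtain ⟨t, ht3, htS⟩ := Finset.exists_of_ssubset hS
    have hU : G ∪ S ⊂ F := by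
      refine (Finset.ssubset_iff_of_subset
        (Finset.union_subset Finset.sdiff_subset (hS.subset.trans habc))).mpr ?_
      refine ⟨t, habc ht3, ?_⟩
      simp only [Finset.mem_union, Finset.mem_sdiff, not_or]
      exact ⟨fun h => h.2 ht3, htS⟩
    refine ⟨⟨Finset.sdiff_disjoint.mono_right hS.subset, hprop _ hU⟩, ?_⟩
    exact_mod_cast hS.subset
  have hT3 : ({a, b, c} : Finset V) ∉ L.faces := by
    intro h
    have := h.1.2
    rw [Finset.sdiff_union_of_subset habc] at this
    exact hF this
  have hcard3 : ({a, b, c} : Finset V).card = 3 :=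
    Finset.card_eq_three.mpr ⟨a, b, c, hab', hac', hbc', rfl⟩
  have hssab : ({a, b} : Finset V) ⊂ {a, b, c} := by
    refine (Finset.ssubset_iff_of_subset (by intro t ht; simp at ht ⊢; tauto)).mpr ?_
    exact ⟨c, by simp, by simp [Ne.symm hac', Ne.symm hbc']⟩
  have hssac : ({a, c} : Finset V) ⊂ {a, b, c} := by
    refine (Finset.ssubset_iff_of_subset (by intro t ht; simp at ht ⊢; tauto)).mpr ?_
    exact ⟨b, by simp, by simp [Ne.symm hab', hbc']⟩
  have hssbc : ({b, c} : Finset V) ⊂ {a, b, c} := by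
    refine (Finset.ssubset_iff_of_subset (by intro t ht; simp at ht ⊢; tauto)).mpr ?_
    exact ⟨a, by simp, by simp [hab', hac']⟩
  have hpab : ({a, b} : Finset V) ∈ SC.faceSet L 2 :=
    ⟨hface _ hssab, Finset.card_pair hab'⟩
  have hpac : ({a, c} : Finset V) ∈ SC.faceSet L 2 :=
    ⟨hface _ hssac, Finset.card_pair hac'⟩
  have hpbc : ({b, c} : Finset V) ∈ SC.faceSet L 2 :=
    ⟨hface _ hssbc, Finset.card_pair hbc'⟩
  have hne1 : ({b, c} : Finset V) ≠ {a, b} := by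
    intro h
    have : c ∈ ({a, b} : Finset V) := h ▸ Finset.mem_insert_of_mem (Finset.mem_singleton_self c)
    rcases Finset.mem_insert.mp this with h' | h'
    · exact hac' h'.symm
    · exact hbc' (Finset.mem_singleton.mp h').symm
  have hne2 : ({a, c} : Finset V) ≠ {a, b} := by
    intro h
    have : c ∈ ({a, b} : Finset V) := h ▸ Finset.mem_insert_of_mem (Finset.mem_singleton_self c)
    rcases Finset.mem_insert.mp this with h' | h'
    · exact hac' h'.symm
    · exact hbc' (Finset.mem_singleton.mp h').symm
  set z : SC.Chains k L 2 :=
    Finsupp.single (⟨{b, c}, hpbc⟩ : SC.faceSet L 2) (1 : k) -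
      Finsupp.single (⟨{a, c}, hpac⟩ : SC.faceSet L 2) (1 : k) +
      Finsupp.single (⟨{a, b}, hpab⟩ : SC.faceSet L 2) (1 : k) with hzdef
  have hz1 : SC.bd k L 1 z = 0 := by
    rw [hzdef, map_add, map_sub, bd_single, bd_single, bd_single,
      bdFace_pair k L hbc _ rfl, bdFace_pair k L hac _ rfl, bdFace_pair k L hab _ rfl]
    simp only [one_smul]
    abel
  have hz0 : z ≠ 0 := by
    intro h
    have h2 : z ⟨{a, b}, hpab⟩ = (0 : k) := by rw [h]; rfl
    rw [hzdef, Finsupp.add_apply, Finsupp.sub_apply, Finsupp.single_eq_same,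
      Finsupp.single_apply, Finsupp.single_apply,
      if_neg (fun hh : (⟨{b, c}, hpbc⟩ : SC.faceSet L 2) = ⟨{a, b}, hpab⟩ =>
        hne1 (congrArg Subtype.val hh)),
      if_neg (fun hh : (⟨{a, c}, hpac⟩ : SC.faceSet L 2) = ⟨{a, b}, hpab⟩ =>
        hne2 (congrArg Subtype.val hh))] at h2
    norm_num at h2
  have hnz : SC.HNonzero k L 2 := by
    intro hle
    have hcyc : z ∈ SC.cycles k L 2 := by
      rw [cycles_two]
      exact LinearMap.mem_ker.mpr hz1
    obtain ⟨w', hw'⟩ := hle hcyc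
    have hempty : ∀ T : SC.faceSet L 3, False := by
      intro T
      have hTsub : (T : Finset V) ⊆ ({a, b, c} : Finset V) := Finset.coe_subset.mp T.2.1.2
      have : (T : Finset V) = {a, b, c} :=
        Finset.eq_of_subset_of_card_le hTsub (by rw [T.2.2, hcard3])
      exact hT3 (this ▸ T.2.1)
    have hw0 : w' = 0 := by
      ext T
      exact (hempty T).elim
    rw [hw0, map_zero] at hw'
    exact hz0 hw'.symm
  have hmem : ((3 : ℕ) : ℕ∞) ∈ ((fun W : Finset V => (W.card : ℕ∞)) ''
      {W : Finset V | ∃ F ∈ K.faces, SC.HNonzero k ((K.link F).restrict ↑W) 2}) :=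
    ⟨{a, b, c}, ⟨G, hGface, hnz⟩, by simp [hcard3]⟩
  have hle3 : SC.girth k K 2 ≤ ((3 : ℕ) : ℕ∞) := sInf_le hmem
  have : (4 : ℕ∞) ≤ ((3 : ℕ) : ℕ∞) := le_trans hg hle3
  norm_num at this

lemma back_dir (K : SC V) (hg : (4 : ℕ∞) ≤ SC.girth k K 2) : K.Flag := by
  have H : ∀ n (F : Finset V), F.card ≤ n →
      (∀ G ⊆ F, G.card ≤ 2 → G ∈ K.faces) → F ∈ K.faces := by
    intro n
    induction n with
    | zero => intro F h1 h2; exact h2 F Finset.Subset.rfl (by omega)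
    | succ n ih =>
      intro F h1 h2
      by_cases hsmall : F.card ≤ 2
      · exact h2 F Finset.Subset.rfl hsmall
      by_contra hF
      have hprop : ∀ G ⊂ F, G ∈ K.faces := fun G hG =>
        ih G (by have := Finset.card_lt_card hG; omega)
          (fun H hH hc => h2 H (hH.trans hG.subset) hc)
      obtain ⟨S, hSF, hS3⟩ := Finset.exists_subset_card_eq (show 3 ≤ F.card by omega)
      obtain ⟨p, q, r, hpq, hpr, hqr, rfl⟩ := Finset.card_eq_three.mp hS3
      have hmF : p ∈ F ∧ q ∈ F ∧ r ∈ F :=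
        ⟨hSF (by simp), hSF (by simp), hSF (by simp)⟩
      rcases hpq.lt_or_gt with g1 | g1 <;> rcases hpr.lt_or_gt with g2 | g2 <;>
        rcases hqr.lt_or_gt with g3 | g3
      · exact back3 k K hg hprop hF g1 g3
          (by simp [Finset.insert_subset_iff, hmF.1, hmF.2.1, hmF.2.2])
      · exact back3 k K hg hprop hF g2 g3
          (by simp [Finset.insert_subset_iff, hmF.1, hmF.2.1, hmF.2.2])
      · exact absurd (g1.trans (g3.trans g2)) (lt_irrefl p)
      · exact back3 k K hg hprop hF g2 g1
          (by simp [Finset.insert_subset_iff, hmF.1, hmF.2.1, hmF.2.2])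
      · exact back3 k K hg hprop hF g1 g2
          (by simp [Finset.insert_subset_iff, hmF.1, hmF.2.1, hmF.2.2])
      · exact absurd (g2.trans (g3.trans g1)) (lt_irrefl p)
      · exact back3 k K hg hprop hF g3 g2
          (by simp [Finset.insert_subset_iff, hmF.1, hmF.2.1, hmF.2.2])
      · exact back3 k K hg hprop hF g3 g1
          (by simp [Finset.insert_subset_iff, hmF.1, hmF.2.1, hmF.2.2])
  intro F h2
  exact H F.card F le_rfl h2

end Aux5

/-- A simplicial complex is flag if and only if `gr_1 ≥ 4`
(over any fixed field `k`). -/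
theorem flag_iff_girth_ge_four {V : Type*} [LinearOrder V] (k : Type*) [Field k]
    (K : SC V) :
    K.Flag ↔ (4 : ℕ∞) ≤ SC.girth k K 2 := by
  exact ⟨forward_dir k K, back_dir k K⟩
end

section
/- Let Γ be a flag simplicial complex with gr_{p-1}(Γ) < ∞. Then there exists a vertex subset W of Γ with |W| = gr_{p-1}(Γ) and H̃_{p-1}(Γ[W]; k) ≠ 0; that is, the minimum in the definition of girth is attained with F = ∅. -/
open Finset

lemma SC.ext_faces {V : Type*} {K₁ K₂ : SC V} (h : K₁.faces = K₂.faces) : K₁ = K₂ := by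
  cases K₁; cases K₂; cases h; rfl

/-- In a flag complex, the restriction of a link is an induced subcomplex on the
common neighborhood. -/
lemma SC.link_restrict_eq {V : Type*} [LinearOrder V] (K : SC V)
    (hflag : K.Flag) {F : Finset V} (hF : F ∈ K.faces) (W : Finset V)
    [DecidablePred fun v => v ∉ F ∧ ∀ f ∈ F, ({v, f} : Finset V) ∈ K.faces] :
    (K.link F).restrict ↑W =
      K.restrict ↑(W.filter (fun v => v ∉ F ∧ ∀ f ∈ F, ({v, f} : Finset V) ∈ K.faces)) := by
  apply SC.ext_faces
  ext G
  constructor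
  · rintro ⟨⟨hdisj, hFG⟩, hGW⟩
    refine ⟨K.down_closed hFG Finset.subset_union_right, ?_⟩
    intro v hv
    have hvG : v ∈ G := by exact_mod_cast hv
    simp only [Finset.coe_filter, Set.mem_setOf_eq, Finset.mem_filter]
    refine ⟨hGW hv, Finset.disjoint_right.mp hdisj hvG, fun f hf => ?_⟩
    exact K.down_closed hFG (by
      intro x hx
      rcases Finset.mem_insert.mp hx with rfl | hx
      · exact Finset.mem_union_right _ hvG
      · exact Finset.mem_union_left _ (Finset.mem_singleton.mp hx ▸ hf))
  · rintro ⟨hGK, hGW'⟩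
    have hprop : ∀ v ∈ G, v ∈ W ∧ v ∉ F ∧ ∀ f ∈ F, ({v, f} : Finset V) ∈ K.faces := by
      intro v hv
      have := hGW' (Finset.mem_coe.mpr hv)
      simpa using (Finset.mem_filter.mp (by exact_mod_cast this))
    have hdisj : Disjoint F G :=
      Finset.disjoint_right.mpr fun v hv => (hprop v hv).2.1
    refine ⟨⟨hdisj, ?_⟩, ?_⟩
    · apply hflag
      intro H hH hcard
      by_cases hHF : H ⊆ F
      · exact K.down_closed hF hHF
      by_cases hHG : H ⊆ G
      · exact K.down_closed hGK hHG
      obtain ⟨v, hvH, hvF⟩ := Finset.not_subset.mp hHF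
      obtain ⟨f, hfH, hfG⟩ := Finset.not_subset.mp hHG
      have hvG : v ∈ G := (Finset.mem_union.mp (hH hvH)).resolve_left hvF
      have hfF : f ∈ F := (Finset.mem_union.mp (hH hfH)).resolve_right hfG
      have hne : v ≠ f := fun h => hvF (h ▸ hfF)
      have hsub : ({v, f} : Finset V) ⊆ H := by
        intro x hx
        rcases Finset.mem_insert.mp hx with rfl | hx
        · exact hvH
        · exact Finset.mem_singleton.mp hx ▸ hfH
      have hcard2 : ({v, f} : Finset V).card = 2 := Finset.card_pair hne
      have : ({v, f} : Finset V) = H :=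
        Finset.eq_of_subset_of_card_le hsub (by omega)
      rw [← this]
      exact (hprop v hvG).2.2 f hfF
    · intro v hv
      have hvG : v ∈ G := by exact_mod_cast hv
      exact Finset.mem_coe.mpr (hprop v hvG).1

lemma SC.link_empty {V : Type*} [LinearOrder V] (K : SC V) : K.link ∅ = K := by
  apply SC.ext_faces
  ext G
  simp [SC.link]

/-- If `K` is flag and `gr_{p-1}(K) < ∞`, then the minimum in the
definition of the girth is attained with `F = ∅`: there is a vertex set `W` with
`|W| = gr_{p-1}(K)` and `H̃_{p-1}(K[W]; k) ≠ 0`. -/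
theorem flag_girth_attained {V : Type*} [LinearOrder V] (k : Type*) [Field k]
    (K : SC V) (hflag : K.Flag) (p : ℕ) (hp : 1 ≤ p)
    (hfin : SC.girth k K p ≠ ⊤) :
    ∃ W : Finset V, (W.card : ℕ∞) = SC.girth k K p ∧
      SC.HNonzero k (K.restrict ↑W) p := by
  classical
  set S : Set (Finset V) :=
    {W : Finset V | ∃ F ∈ K.faces, SC.HNonzero k ((K.link F).restrict ↑W) p} with hS
  have hgirth_eq : SC.girth k K p = sInf ((fun W : Finset V => (W.card : ℕ∞)) '' S) := by
    rw [hS]; rfl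
  have hSne : S.Nonempty := by
    by_contra h
    rw [Set.not_nonempty_iff_eq_empty] at h
    apply hfin
    rw [hgirth_eq, h, Set.image_empty, sInf_empty]
  set T : Set ℕ := {n : ℕ | ∃ W ∈ S, W.card = n} with hT
  have hTne : T.Nonempty := by
    obtain ⟨W, hW⟩ := hSne
    exact ⟨W.card, W, hW, rfl⟩
  set n₀ := sInf T with hn₀
  obtain ⟨W, hWS, hWcard⟩ := Nat.sInf_mem hTne
  have hgirth : SC.girth k K p = (n₀ : ℕ∞) := by
    rw [hgirth_eq]
    apply le_antisymm
    · apply sInf_le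
      refine ⟨W, hWS, ?_⟩
      show (W.card : ℕ∞) = (n₀ : ℕ∞)
      exact_mod_cast hWcard
    · apply le_sInf
      rintro x ⟨W', hW', rfl⟩
      show (n₀ : ℕ∞) ≤ (W'.card : ℕ∞)
      have : sInf T ≤ W'.card := Nat.sInf_le ⟨W', hW', rfl⟩
      exact_mod_cast hn₀ ▸ this
  obtain ⟨F, hF, hH⟩ := hWS
  set W' := W.filter (fun v => v ∉ F ∧ ∀ f ∈ F, ({v, f} : Finset V) ∈ K.faces) with hW'
  have heq := SC.link_restrict_eq K hflag hF W
  rw [heq] at hH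
  have hW'S : W' ∈ S := by
    refine ⟨∅, K.down_closed hF (Finset.empty_subset F), ?_⟩
    rwa [SC.link_empty]
  have h1 : n₀ ≤ W'.card := Nat.sInf_le ⟨W', hW'S, rfl⟩
  have h2 : W'.card ≤ n₀ := by
    rw [hn₀, ← hWcard]
    exact Finset.card_filter_le _ _
  have h3 : W'.card = n₀ := le_antisymm h2 h1
  exact ⟨W', by rw [hgirth]; exact_mod_cast h3, hH⟩
end

section
/- Let Γ be a simplicial complex containing a closed walk with (not necessarily distinct) vertices v_1, …, v_r and edges v_i v_{i+1} for 1 ≤ i ≤ r (indices mod r). Suppose there is at most one index i such that {v_{i-1}, v_i, v_{i+1}} is a face of Γ. Then gr_1(Γ) ≤ r. -/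
open Finset

namespace SC

variable {V : Type*} [LinearOrder V] {k : Type*} [Field k]

lemma my_bdFace_apply (K : SC V) (n : ℕ) (F : faceSet K (n+1)) (e : faceSet K n) :
    (bdFace k K n F) e =
      ∑ v ∈ (F : Finset V),
        (-1 : k) ^ (((F : Finset V).filter (fun x => x < v)).card) *
          (if (F : Finset V).erase v = (e : Finset V) then 1 else 0) := by
  rw [bdFace, Finsupp.finset_sum_apply,
    ← Finset.sum_attach ((F : Finset V)) (fun v => (-1 : k) ^ (((F : Finset V).filter (fun x => x < v)).card) * (if (F : Finset V).erase v = (e : Finset V) then 1 else 0))]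
  refine Finset.sum_congr rfl fun v _ => ?_
  rw [Finsupp.smul_apply, Finsupp.single_apply, smul_eq_mul]
  congr 1
  by_cases h : ((F : Finset V).erase ↑v) = (e : Finset V)
  · rw [if_pos h, if_pos (Subtype.ext h)]
  · rw [if_neg h, if_neg (fun hh => h (congrArg Subtype.val hh))]

lemma my_bd_apply (K : SC V) (n : ℕ) (c : Chains k K (n+1)) (e : faceSet K n) :
    (bd k K n c) e = ∑ F ∈ c.support, c F * (bdFace k K n F) e := by
  rw [bd, Finsupp.lsum_apply, Finsupp.sum, Finsupp.finset_sum_apply]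
  refine Finset.sum_congr rfl fun F _ => ?_
  rw [LinearMap.toSpanSingleton_apply, Finsupp.smul_apply, smul_eq_mul]

lemma my_girth_le_of_witness (K : SC V) (W : Finset V) (F : Finset V) (hF : F ∈ K.faces)
    (h : HNonzero k ((K.link F).restrict ↑W) 2) : girth k K 2 ≤ (W.card : ℕ∞) :=
  sInf_le ⟨W, ⟨F, hF, h⟩, rfl⟩

lemma my_walk_per_mul (w : ℕ → V) (r : ℕ) (hper : ∀ i, w (i + r) = w i) :
    ∀ q j, w (j + r * q) = w j := by
  intro q
  induction q with
  | zero => intro j; simp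
  | succ n ih =>
    intro j
    have h : j + r * (n+1) = (j + r * n) + r := by ring
    rw [h, hper, ih]

lemma my_walk_mod (w : ℕ → V) (r : ℕ) (hper : ∀ i, w (i + r) = w i) (i : ℕ) :
    w i = w (i % r) := by
  conv_lhs => rw [← Nat.mod_add_div i r]
  exact my_walk_per_mul w r hper (i / r) (i % r)

lemma my_walk_congr (w : ℕ → V) (r : ℕ) (hper : ∀ i, w (i + r) = w i) {i j : ℕ}
    (h : i % r = j % r) : w i = w j := by
  rw [my_walk_mod w r hper i, my_walk_mod w r hper j, h]

lemma my_bdFace_pair (K : SC V) (F : faceSet K 2) (a b : V) (hab : a < b)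
    (hF : (F : Finset V) = {a, b}) (e : faceSet K 1) :
    (bdFace k K 1 F) e = (if ({b} : Finset V) = (e : Finset V) then (1:k) else 0)
      - (if ({a} : Finset V) = (e : Finset V) then 1 else 0) := by
  have hne : a ≠ b := ne_of_lt hab
  have h1 : ({a,b} : Finset V).erase a = {b} := by
    rw [Finset.erase_insert (by simp [hne])]
  have h2 : ({a,b} : Finset V).erase b = {a} := by
    rw [Finset.pair_comm, Finset.erase_insert (by simp [hne.symm])]
  have h3 : ({a,b} : Finset V).filter (fun x => x < a) = ∅ := by
    ext x
    simp only [Finset.mem_filter, Finset.mem_insert, Finset.mem_singleton,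
      Finset.notMem_empty, iff_false, not_and]
    rintro (h | h) <;> subst h
    · exact lt_irrefl _
    · exact fun hlt => absurd hlt (not_lt.mpr hab.le)
  have h4 : ({a,b} : Finset V).filter (fun x => x < b) = {a} := by
    ext x
    simp only [Finset.mem_filter, Finset.mem_insert, Finset.mem_singleton]
    constructor
    · rintro ⟨h | h, hlt⟩
      · exact h
      · subst h; exact absurd hlt (lt_irrefl _)
    · rintro h; subst h; exact ⟨Or.inl rfl, hab⟩
  rw [my_bdFace_apply, hF, Finset.sum_pair hne, h1, h2, h3, h4]
  simp only [Finset.card_empty, Finset.card_singleton, pow_zero, pow_one, one_mul]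
  ring

end SC

namespace SC

set_option linter.unusedSectionVars false
set_option maxHeartbeats 1000000

variable {V : Type*} [LinearOrder V] {k : Type*} [Field k]

/-- Core dichotomy for a closed walk with pairwise distinct vertices. -/
lemma my_core (K : SC V) (r : ℕ) (hr3 : 3 ≤ r) (w : ℕ → V)
    (hper : ∀ i, w (i + r) = w i)
    (hedge : ∀ i < r, w i ≠ w (i + 1) ∧ ({w i, w (i + 1)} : Finset V) ∈ K.faces)
    (hinj : ∀ i j, i < r → j < r → w i = w j → i = j) :
    girth k K 2 ≤ (r : ℕ∞) ∨
      ∃ T ∈ K.faces, T.card = 3 ∧ ({w 1, w (1+1)} : Finset V) ⊆ T ∧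
        ∀ x ∈ T, ∃ j < r, w j = x := by
  classical
  have hrpos : 0 < r := by omega
  have hedgeAll : ∀ i, w i ≠ w (i + 1) ∧ ({w i, w (i + 1)} : Finset V) ∈ K.faces := by
    intro i
    have h1 : w i = w (i % r) := my_walk_mod w r hper i
    have h2 : w (i + 1) = w (i % r + 1) :=
      my_walk_congr w r hper ((Nat.mod_modEq i r).add_right 1).symm
    rw [h1, h2]
    exact hedge (i % r) (Nat.mod_lt _ hrpos)
  set W : Finset V := (Finset.range r).image w with hW
  have hinj' : Set.InjOn w ↑(Finset.range r) := by
    intro i hi j hj h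
    exact hinj i j (by simpa using hi) (by simpa using hj) h
  have hWcard : W.card = r := by
    rw [hW, Finset.card_image_of_injOn hinj', Finset.card_range]
  have memW : ∀ i, w i ∈ W := by
    intro i
    rw [hW]
    exact Finset.mem_image.mpr ⟨i % r, Finset.mem_range.mpr (Nat.mod_lt _ hrpos),
      (my_walk_mod w r hper i).symm⟩
  set L : SC V := (K.link ∅).restrict ↑W with hL
  have hLfaces : ∀ G : Finset V, G ∈ L.faces ↔ G ∈ K.faces ∧ ↑G ⊆ (↑W : Set V) := by
    intro G
    constructor
    · rintro ⟨⟨-, hG⟩, hGW⟩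
      exact ⟨by simpa using hG, hGW⟩
    · rintro ⟨hG, hGW⟩
      exact ⟨⟨Finset.disjoint_empty_left _, by simpa using hG⟩, hGW⟩
  have hE2 : ∀ i, ({w i, w (i + 1)} : Finset V) ∈ faceSet L 2 := by
    intro i
    refine ⟨(hLfaces _).mpr ⟨(hedgeAll i).2, ?_⟩, Finset.card_pair (hedgeAll i).1⟩
    intro x hx
    simp only [Finset.coe_insert, Set.mem_insert_iff, Finset.coe_singleton,
      Set.mem_singleton_iff] at hx
    rcases hx with h | h <;> subst h <;> exact Finset.mem_coe.mpr (memW _)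
  set E : ℕ → faceSet L 2 := fun i => ⟨{w i, w (i + 1)}, hE2 i⟩ with hE
  set ε : ℕ → k := fun i => if w i < w (i + 1) then 1 else -1 with hEps
  set z : Chains k L 2 := ∑ i ∈ Finset.range r, ε i • Finsupp.single (E i) 1 with hz
  have tele : ∀ (i : ℕ) (e : faceSet L 1),
      ε i * (bdFace k L 1 (E i)) e =
        (if ({w (i+1)} : Finset V) = (e : Finset V) then (1:k) else 0)
          - (if ({w i} : Finset V) = (e : Finset V) then 1 else 0) := by
    intro i e
    rcases lt_or_gt_of_ne (hedgeAll i).1 with h | h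
    · have hεi : ε i = 1 := by rw [hEps]; exact if_pos h
      rw [hεi, one_mul, my_bdFace_pair L (E i) (w i) (w (i+1)) h rfl e]
    · have hεi : ε i = -1 := by rw [hEps]; exact if_neg (not_lt.mpr h.le)
      rw [hεi, my_bdFace_pair L (E i) (w (i+1)) (w i) h (Finset.pair_comm (w i) (w (i+1))) e]
      ring
  have hzcyc : bd k L 1 z = 0 := by
    have hbdz : bd k L 1 z = ∑ i ∈ Finset.range r, ε i • bdFace k L 1 (E i) := by
      rw [hz, map_sum]
      refine Finset.sum_congr rfl fun i _ => ?_
      rw [LinearMap.map_smul, bd, Finsupp.lsum_single, LinearMap.toSpanSingleton_apply, one_smul]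
    ext e
    rw [hbdz, Finsupp.finset_sum_apply]
    simp only [Finsupp.smul_apply, smul_eq_mul]
    rw [Finset.sum_congr rfl fun i _ => tele i e,
      Finset.sum_range_sub (fun i => if ({w i} : Finset V) = (e : Finset V) then (1:k) else 0) r]
    have hw0 : w r = w 0 := by have := hper 0; rwa [Nat.zero_add] at this
    rw [hw0, sub_self]
    simp
  by_cases hT : ∃ T ∈ K.faces, T.card = 3 ∧ ({w 1, w (1+1)} : Finset V) ⊆ T ∧
      ∀ x ∈ T, ∃ j < r, w j = x
  · exact Or.inr hT
  · left
    have hempty : ∅ ∈ K.faces := K.down_closed (hedge 0 hrpos).2 (Finset.empty_subset _)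
    have hpairne : ∀ i, i < r → i ≠ 1 →
        ({w i, w (i+1)} : Finset V) ≠ ({w 1, w (1+1)} : Finset V) := by
      intro i hi hne1 hEq
      have hwi : w i ∈ ({w 1, w (1+1)} : Finset V) := by
        rw [← hEq]; exact Finset.mem_insert_self _ _
      rcases Finset.mem_insert.mp hwi with h | h
      · exact hne1 (hinj i 1 hi (by omega) h)
      · have h2 : w i = w 2 := by simpa using h
        have hi2 : i = 2 := hinj i 2 hi (by omega) h2
        subst hi2
        have hw3 : w (2+1) ∈ ({w 1, w (1+1)} : Finset V) := by
          rw [← hEq]; exact Finset.mem_insert_of_mem (Finset.mem_singleton_self _)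
        have h3r : w (2+1) = w (3 % r) := my_walk_mod w r hper 3
        have h3lt : 3 % r < r := Nat.mod_lt _ hrpos
        rcases Finset.mem_insert.mp hw3 with h' | h'
        · have h31 : 3 % r = 1 := hinj _ _ h3lt (by omega) (by rw [← h3r]; exact h')
          rcases Nat.lt_or_ge r 4 with h4 | h4
          · have hr' : r = 3 := by omega
            rw [hr'] at h31; omega
          · rw [Nat.mod_eq_of_lt (by omega)] at h31; omega
        · have h'' : w (3 % r) = w 2 := by rw [← h3r]; simpa using h'
          have h32 : 3 % r = 2 := hinj _ _ h3lt (by omega) h''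
          rcases Nat.lt_or_ge r 4 with h4 | h4
          · have hr' : r = 3 := by omega
            rw [hr'] at h32; omega
          · rw [Nat.mod_eq_of_lt (by omega)] at h32; omega
    have hH : HNonzero k L 2 := by
      intro hle
      have hzc : z ∈ cycles k L 2 := by
        show z ∈ LinearMap.ker (bd k L 1)
        exact LinearMap.mem_ker.mpr hzcyc
      obtain ⟨c, hc⟩ := LinearMap.mem_range.mp (hle hzc)
      have hz1 : z (E 1) = ε 1 := by
        rw [hz, Finsupp.finset_sum_apply]
        simp only [Finsupp.smul_apply, Finsupp.single_apply, smul_eq_mul]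
        rw [Finset.sum_eq_single_of_mem 1 (Finset.mem_range.mpr (by omega))
          (fun i hi hne => by
            rw [if_neg, mul_zero]
            intro hEi
            exact hpairne i (Finset.mem_range.mp hi) hne (congrArg Subtype.val hEi))]
        rw [if_pos rfl, mul_one]
      have hbc1 : (bd k L 2 c) (E 1) = 0 := by
        rw [my_bd_apply]
        refine Finset.sum_eq_zero fun F _ => ?_
        have hFz : (bdFace k L 2 F) (E 1) = 0 := by
          rw [my_bdFace_apply]
          refine Finset.sum_eq_zero fun v hv => ?_
          rw [if_neg, mul_zero]
          intro hEr
          refine hT ⟨(F : Finset V), ((hLfaces _).mp F.2.1).1, F.2.2, ?_, ?_⟩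
          · have : ({w 1, w (1+1)} : Finset V) = ((E 1 : faceSet L 2) : Finset V) := rfl
            rw [this, ← hEr]
            exact Finset.erase_subset _ _
          · intro x hx
            have hxW : x ∈ W := ((hLfaces _).mp F.2.1).2 hx
            obtain ⟨j, hj, hjx⟩ := Finset.mem_image.mp (by rwa [hW] at hxW)
            exact ⟨j, Finset.mem_range.mp hj, hjx⟩
        rw [hFz, mul_zero]
      rw [hc, hz1] at hbc1
      have hε1 : ε 1 = 1 ∨ ε 1 = -1 := by
        rw [hEps]
        by_cases h : w 1 < w (1+1) <;> simp [h]
      rcases hε1 with h | h <;> rw [h] at hbc1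
      · exact one_ne_zero hbc1
      · exact one_ne_zero (neg_eq_zero.mp hbc1)
    have hfin := my_girth_le_of_witness (k := k) K W ∅ hempty hH
    rw [hWcard] at hfin
    exact hfin

end SC

namespace SC

set_option linter.unusedSectionVars false
set_option maxHeartbeats 1000000

variable {V : Type*} [LinearOrder V] {k : Type*} [Field k]

/-- Shortcut a closed walk to the segment `w s, …, w (s+m-1), (w s)`. -/
lemma my_seg (K : SC V) (r : ℕ) (w : ℕ → V)
    (hedge : ∀ i < r, w i ≠ w (i + 1) ∧ ({w i, w (i + 1)} : Finset V) ∈ K.faces)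
    (hnf : ∀ i < r - 1, ({w i, w (i + 1), w (i + 2)} : Finset V) ∉ K.faces)
    (IH : ∀ m, m < r → ∀ w' : ℕ → V, 1 ≤ m → (∀ i, w' (i + m) = w' i) →
      (∀ i < m, w' i ≠ w' (i + 1) ∧ ({w' i, w' (i + 1)} : Finset V) ∈ K.faces) →
      (∀ i < m - 1, ({w' i, w' (i + 1), w' (i + 2)} : Finset V) ∉ K.faces) →
      girth k K 2 ≤ (m : ℕ∞))
    (s m : ℕ) (hm : 3 ≤ m) (hmr : m < r) (hsm : s + m ≤ r)
    (hcne : w (s + m - 1) ≠ w s) (hce : ({w (s + m - 1), w s} : Finset V) ∈ K.faces)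
    (hlast : ({w (s + m - 2), w (s + m - 1), w s} : Finset V) ∉ K.faces) :
    girth k K 2 ≤ (m : ℕ∞) := by
  set u : ℕ → V := fun i => w (s + i % m) with hu
  have hui : ∀ i, i < m → u i = w (s + i) := by
    intro i hi
    simp only [hu]
    rw [Nat.mod_eq_of_lt hi]
  have huim : ∀ i, i % m = 0 → u i = w s := by
    intro i hi
    simp only [hu]
    rw [hi, Nat.add_zero]
  refine IH m hmr u (by omega) ?_ ?_ ?_
  · intro i
    simp only [hu, Nat.add_mod_right]
  · intro i hi
    rcases Nat.lt_or_ge (i+1) m with h1 | h1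
    · rw [hui i hi, hui (i+1) h1, show s + (i+1) = (s + i) + 1 by omega]
      exact hedge (s+i) (by omega)
    · have him : i = m - 1 := by omega
      rw [hui i hi, huim (i+1) (by rw [show i+1 = m by omega]; exact Nat.mod_self m), show s + i = s + m - 1 by omega]
      exact ⟨hcne, hce⟩
  · intro i hi
    rw [hui i (by omega), hui (i+1) (by omega), show s + (i+1) = (s+i)+1 by omega]
    rcases Nat.lt_or_ge (i+2) m with h2 | h2
    · rw [hui (i+2) h2, show s + (i+2) = (s+i)+2 by omega]
      exact hnf (s + i) (by omega)
    · rw [huim (i+2) (by rw [show i+2 = m by omega]; exact Nat.mod_self m), show s + i = s + m - 2 by omega,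
        show s + m - 2 + 1 = s + m - 1 by omega]
      exact hlast

end SC

namespace SC

set_option linter.unusedSectionVars false
set_option maxHeartbeats 1000000

variable {V : Type*} [LinearOrder V] {k : Type*} [Field k]

lemma my_main (K : SC V) (r : ℕ) : ∀ w : ℕ → V, 1 ≤ r →
    (∀ i, w (i + r) = w i) →
    (∀ i < r, w i ≠ w (i + 1) ∧ ({w i, w (i + 1)} : Finset V) ∈ K.faces) →
    (∀ i < r - 1, ({w i, w (i + 1), w (i + 2)} : Finset V) ∉ K.faces) →
    girth k K 2 ≤ (r : ℕ∞) := by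
  induction r using Nat.strong_induction_on with
  | _ r IH =>
  intro w hr hper hedge hnf
  classical
  have hr3 : 3 ≤ r := by
    by_contra hlt
    push_neg at hlt
    interval_cases r
    · have h01 := (hedge 0 (by omega)).1
      have hp := hper 0
      rw [Nat.zero_add] at hp
      exact h01 hp.symm
    · have hnf0 := hnf 0 (by omega)
      have hw2 : w 2 = w 0 := by have := hper 0; rwa [Nat.zero_add] at this
      apply hnf0
      have hEq : ({w 0, w (0+1), w (0+2)} : Finset V) = {w 0, w (0+1)} := by
        rw [show (0:ℕ)+2 = 2 from rfl, hw2]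
        ext y; simp; tauto
      rw [hEq]
      exact (hedge 0 (by omega)).2
  by_cases hrep : ∃ a b, a < b ∧ b < r ∧ w a = w b
  · obtain ⟨a, b, hab, hbr, hww⟩ := hrep
    have hm1 : b ≠ a + 1 := by
      intro h; subst h; exact (hedge a (by omega)).1 hww
    have hm2 : b ≠ a + 2 := by
      intro h
      subst h
      apply hnf a (by omega)
      have hEq : ({w a, w (a+1), w (a+2)} : Finset V) = {w a, w (a+1)} := by
        rw [← hww]
        ext y; simp; tauto
      rw [hEq]
      exact (hedge a (by omega)).2
    refine le_trans (my_seg K r w hedge hnf IH a (b - a) (by omega) (by omega) (by omega)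
      ?_ ?_ ?_) (Nat.cast_le.mpr (by omega : b - a ≤ r))
    · rw [show a + (b-a) - 1 = b - 1 by omega, hww]
      have h := (hedge (b-1) (by omega)).1
      rwa [show b - 1 + 1 = b by omega] at h
    · rw [show a + (b-a) - 1 = b - 1 by omega, hww]
      have h := (hedge (b-1) (by omega)).2
      rwa [show b - 1 + 1 = b by omega] at h
    · rw [show a + (b-a) - 2 = b - 2 by omega, show a + (b-a) - 1 = b - 1 by omega, hww]
      have h := hnf (b-2) (by omega)
      rwa [show b - 2 + 1 = b - 1 by omega, show b - 2 + 2 = b by omega] at h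
  · push_neg at hrep
    have hinj : ∀ i j, i < r → j < r → w i = w j → i = j := by
      intro i j hi hj h
      by_contra hne
      rcases Nat.lt_or_ge i j with hlt | hge
      · exact hrep i j hlt hj h
      · exact hrep j i (by omega) hi h.symm
    rcases my_core (k := k) K r hr3 w hper hedge hinj with hdone | ⟨T, hTK, hT3, hTsub, hTvert⟩
    · exact hdone
    · have hw12 : w 1 ≠ w (1+1) := (hedge 1 (by omega)).1
      obtain ⟨x, hxT, hxn⟩ := Finset.exists_of_ssubset
        (⟨hTsub, fun hTs => by
          have hcc := Finset.card_le_card hTs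
          rw [hT3, Finset.card_pair hw12] at hcc
          omega⟩ : ({w 1, w (1+1)} : Finset V) ⊂ T)
      have hxx : x ≠ w 1 ∧ x ≠ w (1+1) := by
        constructor <;> intro h <;> apply hxn <;> simp [h]
      have hTx : T = {w 1, w (1+1), x} := by
        refine (Finset.eq_of_subset_of_card_le ?_ ?_).symm
        · intro y hy
          simp only [Finset.mem_insert, Finset.mem_singleton] at hy
          rcases hy with h|h|h
          · subst h; exact hTsub (Finset.mem_insert_self _ _)
          · subst h; exact hTsub (by simp)
          · subst h; exact hxT
        · have hc : ({w 1, w (1+1), x} : Finset V).card = 3 := by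
            rw [Finset.card_insert_of_notMem (by
                simp only [Finset.mem_insert, Finset.mem_singleton]
                push_neg
                exact ⟨hw12, Ne.symm hxx.1⟩),
              Finset.card_insert_of_notMem (by
                simp only [Finset.mem_singleton]
                exact Ne.symm hxx.2),
              Finset.card_singleton]
          rw [hT3, hc]
      obtain ⟨j, hjr, hjw⟩ := hTvert x hxT
      have hj1 : j ≠ 1 := fun h => hxx.1 (by rw [← hjw, h])
      have hj2 : j ≠ 2 := fun h => hxx.2 (by rw [← hjw, h, show (2:ℕ) = 1+1 from rfl])
      have hj0 : j ≠ 0 := by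
        intro h
        apply hnf 0 (by omega)
        rw [show (0:ℕ)+1 = 1 from rfl, show (0:ℕ)+2 = 1+1 from rfl]
        have hEq : ({w 0, w 1, w (1+1)} : Finset V) = T := by
          rw [hTx, ← hjw, h]
          ext y; simp; tauto
        rw [hEq]; exact hTK
      have hj3 : j ≠ 3 := by
        intro h
        apply hnf 1 (by omega)
        rw [show (1:ℕ)+2 = 3 from rfl]
        have hEq : ({w 1, w (1+1), w 3} : Finset V) = T := by
          rw [hTx, ← hjw, h]
        rw [hEq]; exact hTK
      have hj4 : 4 ≤ j := by omega
      have hPex : ∃ m', ∃ a b, 1 ≤ a ∧ a + 3 ≤ b ∧ b ≤ r - 1 ∧ m' = b - a ∧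
          (({w a, w (a+1), w b} : Finset V) ∈ K.faces ∨
            ({w a, w (b-1), w b} : Finset V) ∈ K.faces) := by
        refine ⟨j - 1, 1, j, le_refl 1, by omega, by omega, rfl, Or.inl ?_⟩
        have hEq : ({w 1, w (1+1), w j} : Finset V) = T := by
          rw [hTx, hjw]
        rw [hEq]; exact hTK
      obtain ⟨a, b, ha1, hab3, hbr1, hm₀, hcase⟩ := Nat.find_spec hPex
      have hdist : ∀ p q, p < r → q < r → p ≠ q → w p ≠ w q := by
        intro p q hp hq hne h
        exact hne (hinj p q hp hq h)
      rcases hcase with h1 | h2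
      · refine le_trans (my_seg K r w hedge hnf IH (a+1) (b-a) (by omega) (by omega)
          (by omega) ?_ ?_ ?_) (Nat.cast_le.mpr (by omega : b - a ≤ r))
        · rw [show a + 1 + (b-a) - 1 = b by omega]
          exact hdist b (a+1) (by omega) (by omega) (by omega)
        · rw [show a + 1 + (b-a) - 1 = b by omega]
          refine K.down_closed h1 ?_
          intro y hy
          simp only [Finset.mem_insert, Finset.mem_singleton] at hy ⊢
          tauto
        · rw [show a + 1 + (b-a) - 2 = b - 1 by omega, show a + 1 + (b-a) - 1 = b by omega]
          rcases Nat.lt_or_ge b (a+4) with hb4 | hb4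
          · have hb : b = a + 3 := by omega
            subst hb
            have heq : ({w (a+3-1), w (a+3), w (a+1)} : Finset V)
                = {w (a+1), w (a+1+1), w (a+1+2)} := by
              rw [show a+3-1 = a+2 by omega, show a+1+1 = a+2 by omega,
                show a+1+2 = a+3 by omega]
              ext y; simp; tauto
            rw [heq]
            exact hnf (a+1) (by omega)
          · intro hmem
            refine Nat.find_min hPex (by omega : b - (a+1) < Nat.find hPex)
              ⟨a+1, b, by omega, by omega, hbr1, rfl, Or.inr ?_⟩
            have heq : ({w (a+1), w (b-1), w b} : Finset V) = {w (b-1), w b, w (a+1)} := by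
              ext y; simp; tauto
            rw [heq]; exact hmem
      · refine le_trans (my_seg K r w hedge hnf IH a (b-a) (by omega) (by omega)
          (by omega) ?_ ?_ ?_) (Nat.cast_le.mpr (by omega : b - a ≤ r))
        · rw [show a + (b-a) - 1 = b - 1 by omega]
          exact hdist (b-1) a (by omega) (by omega) (by omega)
        · rw [show a + (b-a) - 1 = b - 1 by omega]
          refine K.down_closed h2 ?_
          intro y hy
          simp only [Finset.mem_insert, Finset.mem_singleton] at hy ⊢
          tauto
        · rw [show a + (b-a) - 2 = b - 2 by omega, show a + (b-a) - 1 = b - 1 by omega]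
          rcases Nat.lt_or_ge b (a+4) with hb4 | hb4
          · have hb : b = a + 3 := by omega
            subst hb
            have heq : ({w (a+3-2), w (a+3-1), w a} : Finset V)
                = {w a, w (a+1), w (a+2)} := by
              rw [show a+3-2 = a+1 by omega, show a+3-1 = a+2 by omega]
              ext y; simp; tauto
            rw [heq]
            exact hnf a (by omega)
          · intro hmem
            refine Nat.find_min hPex (by omega : b - 1 - a < Nat.find hPex)
              ⟨a, b-1, ha1, by omega, by omega, rfl, Or.inr ?_⟩
            have heq : ({w a, w (b-1-1), w (b-1)} : Finset V) = {w (b-2), w (b-1), w a} := by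
              rw [show b-1-1 = b-2 by omega]
              ext y; simp; tauto
            rw [heq]; exact hmem

end SC


/-- If `K` contains a closed walk `v_1, …, v_r` (indices mod `r`,
vertices not necessarily distinct) whose consecutive pairs are edges, and at most
one index `i` is such that `{v_{i-1}, v_i, v_{i+1}}` is a face of `K`, then
`gr_1(K) ≤ r`. -/
theorem girth_le_of_closed_walk {V : Type*} [LinearOrder V] (k : Type*) [Field k]
    (K : SC V) (r : ℕ) (hr : 1 ≤ r) (w : ℕ → V)
    (hper : ∀ i, w (i + r) = w i)
    (hedge : ∀ i < r, w i ≠ w (i + 1) ∧ ({w i, w (i + 1)} : Finset V) ∈ K.faces)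
    (htri : Set.ncard
      {i : ℕ | i < r ∧ ({w i, w (i + 1), w (i + 2)} : Finset V) ∈ K.faces} ≤ 1) :
    SC.girth k K 2 ≤ (r : ℕ∞) := by
  classical
  set S : Set ℕ := {i : ℕ | i < r ∧ ({w i, w (i + 1), w (i + 2)} : Finset V) ∈ K.faces}
    with hS
  have hSfin : S.Finite := Set.Finite.subset (Set.finite_Iio r) (fun i hi => hi.1)
  have hex : ∃ i₀, ∀ j, j ∈ S → j = i₀ := by
    rcases Set.eq_empty_or_nonempty S with h | ⟨i₀, hi₀⟩
    · exact ⟨r, fun j hj => absurd hj (by rw [h]; exact Set.notMem_empty j)⟩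
    · exact ⟨i₀, fun j hj => (Set.ncard_le_one hSfin).mp htri j hj i₀ hi₀⟩
  obtain ⟨i₀, hi₀⟩ := hex
  set s : ℕ := i₀ + 1 with hs
  set w' : ℕ → V := fun i => w (i + s) with hw'
  have hper' : ∀ i, w' (i + r) = w' i := by
    intro i
    simp only [hw']
    rw [show i + r + s = (i + s) + r by omega, hper]
  have hcongr : ∀ i j : ℕ, i % r = j % r → w i = w j :=
    fun i j h => SC.my_walk_congr w r hper h
  have hmodlt : ∀ i : ℕ, i % r < r := fun i => Nat.mod_lt _ (by omega)
  have hval : ∀ i : ℕ, w' i = w ((i + s) % r) := by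
    intro i
    simp only [hw']
    exact SC.my_walk_mod w r hper (i + s)
  have hval1 : ∀ i : ℕ, w' (i + 1) = w ((i + s) % r + 1) := by
    intro i
    simp only [hw']
    rw [show i + 1 + s = (i + s) + 1 by omega]
    exact hcongr _ _ ((Nat.mod_modEq (i+s) r).add_right 1).symm
  have hval2 : ∀ i : ℕ, w' (i + 2) = w ((i + s) % r + 2) := by
    intro i
    simp only [hw']
    rw [show i + 2 + s = (i + s) + 2 by omega]
    exact hcongr _ _ ((Nat.mod_modEq (i+s) r).add_right 2).symm
  have hedge' : ∀ i < r, w' i ≠ w' (i + 1) ∧ ({w' i, w' (i + 1)} : Finset V) ∈ K.faces := by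
    intro i _
    rw [hval i, hval1 i]
    exact hedge _ (hmodlt _)
  have hnf' : ∀ i < r - 1, ({w' i, w' (i + 1), w' (i + 2)} : Finset V) ∉ K.faces := by
    intro i hi
    rw [hval i, hval1 i, hval2 i]
    intro hmem
    have hj : (i + s) % r = i₀ := hi₀ _ ⟨hmodlt _, hmem⟩
    have hd := Nat.mod_add_div (i + s) r
    rw [hj] at hd
    rcases Nat.eq_zero_or_pos ((i + s) / r) with hq | hq
    · rw [hq] at hd
      omega
    · have hmul : r * 1 ≤ r * ((i + s) / r) := Nat.mul_le_mul_left r hq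
      omega
  exact SC.my_main K r w' hr hper' hedge' hnf'
end

section
/- Let Γ be a (d−1)-dimensional simplicial complex with gr_1(Γ) > 2r. Then between any two given vertices u and v of the directed 1-skeleton of Γ, there are at most (d−1)^{r−1} non-returning walks of length r. -/
open Finset

/-!
Once `gr₁(K) > 2r`, small reduced first homology vanishes everywhere, which forces two
combinatorial facts: `K` is flag (a minimal non-face `S` with `|S| ≥ 3` would make the link of
`S \ T`, restricted to a triple `T ⊆ S`, a hollow triangle), and the 1-skeleton has no induced
cycle with between 4 and `2r` vertices (its edges would sum to a nonzero 1-cycle in the induced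
subcomplex). In such a graph a non-returning walk of length at most `2r` cannot return to its
start. Hence two non-returning walks of length `ℓ ≤ r` from `u` to `v` with different second
vertices `x ≠ y` must have `x ~ y`: otherwise one walk reversed, followed by the other, is a
closed non-returning walk of length `2ℓ`. So the possible second vertices form, together with
`u`, a clique, hence a face of `K`, and there are at most `d - 1` of them; induction on `ℓ` gives
the bound `(d - 1)^(ℓ - 1)`.
-/

namespace SimpleGraph

variable {V : Type*} (G : SimpleGraph V)

def IsNRWalk (L : ℕ) (w : ℕ → V) : Prop :=
  (∀ i < L, G.Adj (w i) (w (i + 1))) ∧ ∀ i, i + 2 ≤ L → Gᶜ.Adj (w i) (w (i + 2))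

/-- `c 0, …, c n` is an induced cycle on `n + 1` vertices. -/
def IsInducedCycle (n : ℕ) (c : ℕ → V) : Prop :=
  G.Adj (c n) (c 0) ∧ (∀ i < n, G.Adj (c i) (c (i + 1))) ∧
    ∀ i j, i + 2 ≤ j → j ≤ n → 0 < i ∨ j < n → Gᶜ.Adj (c i) (c j)

/-- `G` has no induced cycle with at least `4` and at most `B` vertices. -/
def NoInducedCycleUpTo (B : ℕ) : Prop :=
  ∀ ⦃n : ℕ⦄ ⦃c : ℕ → V⦄, 3 ≤ n → n < B → ¬G.IsInducedCycle n c

def nrWalks (L : ℕ) (u v : V) : Set (ℕ → V) :=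
  {w | G.IsNRWalk L w ∧ w 0 = u ∧ ∀ j, L ≤ j → w j = v}

variable {G} {n L B : ℕ} {c w : ℕ → V}

theorem IsInducedCycle.adj_index (hc : G.IsInducedCycle n c) {i j : ℕ} (hi : i ≤ n) (hj : j ≤ n)
    (hadj : G.Adj (c i) (c j)) : j = i + 1 ∨ i = j + 1 ∨ (i = 0 ∧ j = n) ∨ (j = 0 ∧ i = n) := by
  by_contra! h
  rcases lt_trichotomy i j with hij | rfl | hij
  · exact ((G.compl_adj _ _).1 (hc.2.2 i j (by omega) hj (by omega))).2 hadj
  · exact hadj.ne rfl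
  · exact ((G.compl_adj _ _).1 (hc.2.2 j i (by omega) hi (by omega))).2 hadj.symm

theorem IsInducedCycle.injOn (hc : G.IsInducedCycle n c) : Set.InjOn c (Set.Iic n) := by
  intro i hi j hj hij
  by_contra hne
  wlog hlt : i < j generalizing i j
  · exact this hj hi hij.symm (Ne.symm hne) (by omega)
  rw [Set.mem_Iic] at hi hj
  rcases (by omega : j = i + 1 ∨ (i = 0 ∧ j = n) ∨ (i + 2 ≤ j ∧ (0 < i ∨ j < n))) with
    rfl | ⟨rfl, rfl⟩ | ⟨h2, h3⟩
  · exact (hc.2.1 i (by omega)).ne hij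
  · exact hc.1.ne hij.symm
  · exact (hc.2.2 i j h2 hj h3).ne hij

theorem IsInducedCycle.not_triangle (hc : G.IsInducedCycle n c) (hn : 3 ≤ n) {a b d : ℕ}
    (ha : a ≤ n) (hb : b ≤ n) (hd : d ≤ n) (hab : G.Adj (c a) (c b)) (hbd : G.Adj (c b) (c d))
    (had : G.Adj (c a) (c d)) : False := by
  have := hc.adj_index ha hb hab
  have := hc.adj_index hb hd hbd
  have := hc.adj_index ha hd had
  omega

theorem IsNRWalk.mono (hw : G.IsNRWalk L w) {L' : ℕ} (hL : L' ≤ L) : G.IsNRWalk L' w :=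
  ⟨fun i hi => hw.1 i (by omega), fun i hi => hw.2 i (by omega)⟩

theorem IsNRWalk.drop (hw : G.IsNRWalk L w) (m : ℕ) :
    G.IsNRWalk (L - m) (fun t => w (t + m)) :=
  ⟨fun i hi => by simpa [Nat.add_right_comm] using hw.1 (i + m) (by omega),
    fun i hi => by simpa [Nat.add_right_comm] using hw.2 (i + m) (by omega)⟩

theorem IsNRWalk.reverse (hw : G.IsNRWalk L w) : G.IsNRWalk L (fun t => w (L - t)) := by
  refine ⟨fun i hi => ?_, fun i hi => ?_⟩
  · have := hw.1 (L - (i + 1)) (by omega)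
    rw [show L - (i + 1) + 1 = L - i by omega] at this
    exact this.symm
  · have := hw.2 (L - (i + 2)) (by omega)
    rw [show L - (i + 2) + 2 = L - i by omega] at this
    exact this.symm

theorem IsNRWalk.append {s t : ℕ} {P Q : ℕ → V} (hP : G.IsNRWalk s P) (hQ : G.IsNRWalk t Q)
    (hPQ : P s = Q 0) (hjoin : Gᶜ.Adj (P (s - 1)) (Q 1)) :
    G.IsNRWalk (s + t) (fun j => if j ≤ s then P j else Q (j - s)) := by
  refine ⟨fun i hi => ?_, fun i hi => ?_⟩
  · dsimp only
    split_ifs with h1 h2 h2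
    · exact hP.1 i (by omega)
    · obtain rfl : i = s := by omega
      rw [hPQ, show i + 1 - i = 0 + 1 by omega]
      exact hQ.1 0 (by omega)
    · omega
    · convert hQ.1 (i - s) (by omega) using 2; omega
  · dsimp only
    split_ifs with h1 h2 h2
    · exact hP.2 i (by omega)
    · obtain rfl | rfl : i = s ∨ i + 1 = s := by omega
      · rw [hPQ, show i + 2 - i = 0 + 2 by omega]
        exact hQ.2 0 (by omega)
      · convert hjoin using 3 <;> omega
    · omega
    · convert hQ.2 (i - s) (by omega) using 2; omega

theorem IsNRWalk.compl_adj_ends (hB : G.NoInducedCycleUpTo B) (hw : G.IsNRWalk L w)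
    (hL : 2 ≤ L) (hLB : L < B) : Gᶜ.Adj (w 0) (w L) := by
  induction L using Nat.strong_induction_on generalizing w with
  | _ L ih =>
  rcases hL.eq_or_lt with rfl | hL3
  · exact hw.2 0 le_rfl
  have hsub : ∀ i j, i + 2 ≤ j → j ≤ L → j - i < L → Gᶜ.Adj (w i) (w j) := by
    intro i j hij hjL hlt
    simpa [Nat.sub_add_cancel (by omega : i ≤ j)] using
      ih (j - i) hlt ((hw.mono hjL).drop i) (by omega) (by omega)
  have hne : w 0 ≠ w L := fun h =>
    ((G.compl_adj _ _).1 (hsub 0 (L - 1) (by omega) (by omega) (by omega))).2 <| by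
      simpa [h, Nat.sub_add_cancel (by omega : 1 ≤ L)] using (hw.1 (L - 1) (by omega)).symm
  -- by `hsub`, an edge `w 0 ~ w L` would close an induced cycle on `L + 1` vertices
  exact (G.compl_adj _ _).2 ⟨hne, fun hadj =>
    hB hL3 hLB ⟨hadj.symm, hw.1, fun i j h1 h2 h3 => hsub i j h1 h2 (by omega)⟩⟩

theorem IsNRWalk.ne_ends (hB : G.NoInducedCycleUpTo B) (hw : G.IsNRWalk L w) (hL : 2 ≤ L)
    (hLB : L ≤ B) : w 0 ≠ w L := by
  rcases hL.eq_or_lt with rfl | hL3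
  · exact (hw.2 0 le_rfl).ne
  intro h
  have hsep := (hw.mono (Nat.sub_le L 1)).compl_adj_ends hB (by omega) (by omega)
  refine ((G.compl_adj _ _).1 hsep).2 ?_
  simpa [h, Nat.sub_add_cancel (by omega : 1 ≤ L)] using (hw.1 (L - 1) (by omega)).symm

theorem adj_of_mem_nrWalks (hB : G.NoInducedCycleUpTo B) {ℓ : ℕ} (hℓB : 2 * ℓ ≤ B)
    {u v : V} {P Q : ℕ → V} (hP : P ∈ G.nrWalks ℓ u v) (hQ : Q ∈ G.nrWalks ℓ u v)
    (hPQ : P 1 ≠ Q 1) : G.Adj (P 1) (Q 1) := by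
  obtain ⟨hP, hP0, hPv⟩ := hP
  obtain ⟨hQ, hQ0, hQv⟩ := hQ
  have hℓ : 1 ≤ ℓ := by
    by_contra h
    exact hPQ ((hPv 1 (by omega)).trans (hQv 1 (by omega)).symm)
  by_contra hadj
  have hW := hP.reverse.append hQ (by simp [hP0, hQ0]) <| by
    rw [Nat.sub_sub_self hℓ]
    exact (G.compl_adj _ _).2 ⟨hPQ, hadj⟩
  refine hW.ne_ends hB (by omega) (by omega) ?_
  simp [hPv ℓ le_rfl, hQv ℓ le_rfl, show ¬ℓ + ℓ ≤ ℓ by omega]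

end SimpleGraph

theorem subsingleton_setOf_eq_of_le_one {V : Type*} {L : ℕ} (hL : L ≤ 1) (u v : V) :
    {w : ℕ → V | w 0 = u ∧ ∀ j, L ≤ j → w j = v}.Subsingleton := by
  rintro w ⟨hw0, hw⟩ w' ⟨hw0', hw'⟩
  funext j
  rcases j with _ | j
  · rw [hw0, hw0']
  · rw [hw _ (by omega), hw' _ (by omega)]

namespace SimpleGraph

variable {V : Type*} {G : SimpleGraph V} {B : ℕ}

theorem encard_nrWalks_le_one {L : ℕ} (hL : L ≤ 1) (u v : V) : (G.nrWalks L u v).encard ≤ 1 :=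
  Set.encard_le_one_iff_subsingleton.2 <|
    (subsingleton_setOf_eq_of_le_one hL u v).anti fun _ hw => hw.2

theorem encard_nrWalks_le (hB : G.NoInducedCycleUpTo B) {D : ℕ}
    (hnb : ∀ b (s : Finset V), ↑s ⊆ G.neighborSet b → G.IsClique (s : Set V) → s.card ≤ D)
    (v : V) (ℓ : ℕ) (hℓB : 2 * ℓ ≤ B) (u : V) :
    (G.nrWalks ℓ u v).encard ≤ (D ^ (ℓ - 1) : ℕ) := by
  induction ℓ generalizing u with
  | zero => simpa using encard_nrWalks_le_one zero_le_one u v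
  | succ ℓ ih =>
  rcases Nat.eq_zero_or_pos ℓ with rfl | hℓ
  · simpa using encard_nrWalks_le_one le_rfl u v
  set X := (fun w : ℕ → V => w 1) '' G.nrWalks (ℓ + 1) u v
  have hXnb : X ⊆ G.neighborSet u := by
    rintro _ ⟨w, hw, rfl⟩
    simpa [hw.2.1] using hw.1.1 0 (by omega)
  have hXclique : G.IsClique X := by
    rintro _ ⟨P, hP, rfl⟩ _ ⟨Q, hQ, rfl⟩ hPQ
    exact adj_of_mem_nrWalks hB hℓB hP hQ hPQ
  have hXfin : X.Finite := by
    by_contra hinf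
    obtain ⟨t, htX, ht⟩ := Set.Infinite.exists_subset_card_eq hinf (D + 1)
    have := hnb u t (htX.trans hXnb) (hXclique.subset htX)
    omega
  have hXcard : hXfin.toFinset.card ≤ D :=
    hnb u _ (by simpa using hXnb) (by simpa using hXclique)
  have htail : Set.MapsTo (fun w j => w (j + 1)) (G.nrWalks (ℓ + 1) u v)
      (⋃ x ∈ hXfin.toFinset, G.nrWalks ℓ x v) := by
    intro w hw
    refine Set.mem_biUnion (hXfin.mem_toFinset.2 ⟨w, hw, rfl⟩)
      ⟨?_, rfl, fun j hj => hw.2.2 _ (by omega)⟩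
    simpa using hw.1.drop 1
  have htail_inj : Set.InjOn (fun w j => w (j + 1)) (G.nrWalks (ℓ + 1) u v) := by
    intro w hw w' hw' h
    funext j
    rcases j with _ | j
    · rw [hw.2.1, hw'.2.1]
    · exact congrFun h j
  calc (G.nrWalks (ℓ + 1) u v).encard
      ≤ (⋃ x ∈ hXfin.toFinset, G.nrWalks ℓ x v).encard :=
        Set.encard_le_encard_of_injOn htail htail_inj
    _ ≤ ∑ x ∈ hXfin.toFinset, (G.nrWalks ℓ x v).encard := Finset.set_encard_biUnion_le _ _
    _ ≤ ∑ _x ∈ hXfin.toFinset, ((D ^ (ℓ - 1) : ℕ) : ℕ∞) :=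
        Finset.sum_le_sum fun x _ => ih (by omega) x
    _ ≤ ((D ^ (ℓ + 1 - 1) : ℕ) : ℕ∞) := by
        rw [Finset.sum_const, nsmul_eq_mul, Nat.add_sub_cancel, ← Nat.sub_add_cancel hℓ,
          pow_succ', Nat.add_sub_cancel]
        push_cast
        exact mul_le_mul_left (by exact_mod_cast hXcard) _

end SimpleGraph

namespace SC

variable {V : Type*} [LinearOrder V]

def skeleton (K : SC V) : SimpleGraph V where
  Adj x y := x ≠ y ∧ {x, y} ∈ K.faces
  symm := ⟨fun _ _ h => ⟨h.1.symm, pair_comm (α := V) _ _ ▸ h.2⟩⟩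
  loopless := ⟨fun _ h => h.1 rfl⟩

variable {K : SC V}

theorem Flag.mem_faces_of_isClique (hK : K.Flag) (hempty : ∅ ∈ K.faces) {s : Finset V}
    (hs : ∀ x ∈ s, {x} ∈ K.faces) (hcl : K.skeleton.IsClique (s : Set V)) : s ∈ K.faces := by
  refine hK s fun G hG hcard => ?_
  interval_cases h : G.card
  · rwa [card_eq_zero.1 h]
  · obtain ⟨x, rfl⟩ := card_eq_one.1 h
    exact hs x (hG (mem_singleton_self x))
  · obtain ⟨x, y, hxy, rfl⟩ := card_eq_two.1 h
    exact (hcl (hG (by simp)) (hG (by simp)) hxy).2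

theorem Flag.skeleton_isNRWalk (hK : K.Flag) (hempty : ∅ ∈ K.faces) {L : ℕ} {w : ℕ → V}
    (hw : K.IsNRWalk L w) : K.skeleton.IsNRWalk L w := by
  refine ⟨fun i hi => hw.1 i hi, fun i hi => (K.skeleton.compl_adj _ _).2 ⟨(hw.2 i hi).1, ?_⟩⟩
  intro hadj
  have h01 := hw.1 i (by omega)
  have h12 := hw.1 (i + 1) (by omega)
  refine (hw.2 i hi).2 (hK.mem_faces_of_isClique hempty ?_ ?_)
  · intro x hx
    simp only [mem_insert, mem_singleton] at hx
    rcases hx with rfl | rfl | rfl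
    · exact K.down_closed h01.2 (by simp)
    · exact K.down_closed h12.2 (by simp)
    · exact K.down_closed h12.2 (by simp)
  · exact (SimpleGraph.is3Clique_triple_iff.2 ⟨h01, hadj, h12⟩).isClique

theorem Flag.card_le_of_isClique_neighborSet (hK : K.Flag) (hempty : ∅ ∈ K.faces) {d : ℕ}
    (hdim : ∀ F ∈ K.faces, F.card ≤ d) {b : V} {s : Finset V}
    (hs : ↑s ⊆ K.skeleton.neighborSet b) (hcl : K.skeleton.IsClique (s : Set V)) :
    s.card ≤ d - 1 := by
  rcases s.eq_empty_or_nonempty with rfl | ⟨x, hx⟩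
  · simp
  have hb : b ∉ s := fun h => K.skeleton.notMem_neighborSet_self (hs h)
  have hface : insert b s ∈ K.faces := by
    refine hK.mem_faces_of_isClique hempty (fun y hy => ?_) ?_
    · rcases mem_insert.1 hy with rfl | hy
      · exact K.down_closed (hs hx).2 (by simp)
      · exact K.down_closed (hs hy).2 (by simp)
    · rw [coe_insert]
      exact hcl.insert fun y hy _ => hs hy
  have := hdim _ hface
  rw [card_insert_of_notMem hb] at this
  omega

section Homology

variable (k : Type*) [Field k] (L : SC V)

open Classical in
noncomputable def vertexChain (x : V) : Chains k L 1 :=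
  if h : {x} ∈ L.faces then Finsupp.single ⟨{x}, h, card_singleton x⟩ 1 else 0

open Classical in
/-- The oriented edge `[x, y]`; it vanishes unless `{x, y}` is an edge of `L`. -/
noncomputable def edgeChain (x y : V) : Chains k L 2 :=
  if h : {x, y} ∈ L.faces ∧ x ≠ y then
    (if x < y then 1 else -1 : k) • Finsupp.single ⟨{x, y}, h.1, card_pair h.2⟩ 1
  else 0

variable {k L}

theorem edgeChain_comm (x y : V) : L.edgeChain k y x = -L.edgeChain k x y := by
  have hyx : {y, x} ∈ L.faces ∧ y ≠ x ↔ {x, y} ∈ L.faces ∧ x ≠ y := by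
    rw [pair_comm, ne_comm]
  by_cases h : {x, y} ∈ L.faces ∧ x ≠ y
  · rw [edgeChain, edgeChain, dif_pos (hyx.2 h), dif_pos h]
    have hsingle : (⟨{y, x}, (hyx.2 h).1, card_pair (hyx.2 h).2⟩ : L.faceSet 2) =
        ⟨{x, y}, h.1, card_pair h.2⟩ := Subtype.ext (pair_comm y x)
    rw [hsingle]
    rcases h.2.lt_or_gt with hlt | hlt <;> simp [hlt, hlt.not_gt]
  · rw [edgeChain, edgeChain, dif_neg (mt hyx.1 h), dif_neg h, neg_zero]

theorem bd_edgeChain_of_lt {x y : V} (hxy : x < y) (h : {x, y} ∈ L.faces) :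
    bd k L 1 (L.edgeChain k x y) = L.vertexChain k y - L.vertexChain k x := by
  have hx : {x} ∈ L.faces := L.down_closed h (by simp)
  have hy : {y} ∈ L.faces := L.down_closed h (by simp)
  have hattach : ({x, y} : Finset V).attach = {⟨x, by simp⟩, ⟨y, by simp⟩} := by
    ext ⟨z, hz⟩
    simp [eq_comm (a := y)]
  rw [edgeChain, dif_pos ⟨h, hxy.ne⟩, if_pos hxy, one_smul, bd, Finsupp.lsum_single,
    LinearMap.toSpanSingleton_apply_one, bdFace]
  dsimp only
  rw [hattach, sum_pair (by simp [hxy.ne])]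
  simp [vertexChain, hx, hy, filter_insert, filter_singleton, hxy, hxy.not_gt, hxy.ne,
    erase_insert_of_ne, sub_eq_add_neg]

theorem bd_edgeChain {x y : V} (h : {x, y} ∈ L.faces) :
    bd k L 1 (L.edgeChain k x y) = L.vertexChain k y - L.vertexChain k x := by
  rcases lt_trichotomy x y with hxy | rfl | hxy
  · exact bd_edgeChain_of_lt hxy h
  · simp [edgeChain]
  · rw [edgeChain_comm, map_neg, bd_edgeChain_of_lt hxy (pair_comm x y ▸ h), neg_sub]

theorem edgeChain_apply_of_ne {x y : V} {p : L.faceSet 2} (hp : (p : Finset V) ≠ {x, y}) :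
    L.edgeChain k x y p = 0 := by
  unfold edgeChain
  split
  · rw [Finsupp.smul_apply, Finsupp.single_eq_of_ne (fun h => hp (congrArg Subtype.val h)),
      smul_zero]
  · exact Finsupp.zero_apply

theorem edgeChain_apply_self {x y : V} (h : {x, y} ∈ L.faces) (hxy : x ≠ y) :
    L.edgeChain k x y ⟨{x, y}, h, card_pair hxy⟩ ≠ 0 := by
  unfold edgeChain
  rw [dif_pos ⟨h, hxy⟩, Finsupp.smul_apply, Finsupp.single_eq_same]
  split_ifs <;> simp

theorem hNonzero_two_of_cycle {n : ℕ} (hn : 2 ≤ n) {c : ℕ → V} (hc : Set.InjOn c (Set.Iic n))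
    (hedge : ∀ i < n, {c i, c (i + 1)} ∈ L.faces) (hclose : {c n, c 0} ∈ L.faces)
    (htri : ∀ F ∈ L.faces, F.card ≠ 3) : L.HNonzero k 2 := by
  set z : Chains k L 2 :=
    ∑ i ∈ range n, L.edgeChain k (c i) (c (i + 1)) + L.edgeChain k (c n) (c 0) with hz
  have hcycle : z ∈ cycles k L 2 := by
    change bd k L 1 z = 0
    rw [hz, map_add, map_sum,
      sum_congr rfl fun i hi => bd_edgeChain (hedge i (mem_range.1 hi)), bd_edgeChain hclose,
      sum_range_sub (fun i => L.vertexChain k (c i))]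
    abel
  -- every edge of the cycle other than `{c 0, c 1}` contains some `c j` with `j ≥ 2`, so only
  -- the first term of `z` is nonzero at `{c 0, c 1}`
  have hfar : ∀ j, 2 ≤ j → j ≤ n → c j ∉ ({c 0, c 1} : Finset V) := by
    intro j hj hjn hmem
    rcases mem_insert.1 hmem with h | h
    · have := hc (Set.mem_Iic.2 hjn) (Set.mem_Iic.2 (by omega)) h
      omega
    · have := hc (Set.mem_Iic.2 hjn) (Set.mem_Iic.2 (by omega)) (mem_singleton.1 h)
      omega
  have h01 : {c 0, c 1} ∈ L.faces := hedge 0 (by omega)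
  have hne : c 0 ≠ c 1 := fun h => by
    have := hc (Set.mem_Iic.2 (by omega)) (Set.mem_Iic.2 (by omega)) h
    omega
  set p : L.faceSet 2 := ⟨{c 0, c 1}, h01, card_pair hne⟩
  have hsum : (∑ i ∈ range n, L.edgeChain k (c i) (c (i + 1))) p =
      L.edgeChain k (c 0) (c 1) p := by
    rw [Finsupp.finsetSum_apply, sum_eq_single_of_mem 0 (mem_range.2 (by omega))]
    intro i hi hi0
    exact edgeChain_apply_of_ne fun h => hfar (i + 1) (by omega) (mem_range.1 hi) <| by
      rw [show ({c 0, c 1} : Finset V) = _ from h]; simp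
  have hlast : L.edgeChain k (c n) (c 0) p = 0 :=
    edgeChain_apply_of_ne fun h => hfar n hn le_rfl <| by
      rw [show ({c 0, c 1} : Finset V) = _ from h]; simp
  have hz_ne : z p ≠ 0 := by
    rw [hz, Finsupp.add_apply, hsum, hlast, add_zero]
    exact edgeChain_apply_self h01 hne
  intro hle
  obtain ⟨b, hb⟩ := hle hcycle
  have : IsEmpty (L.faceSet 3) := ⟨fun F => htri F F.2.1 F.2.2⟩
  rw [Subsingleton.elim b 0, map_zero] at hb
  exact hz_ne (by rw [← hb]; rfl)

theorem hNonzero_two_of_boundary_simplex {T : Finset V} (hT : T.card = 3)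
    (hL : ∀ U, U ∈ L.faces ↔ U ⊂ T) : L.HNonzero k 2 := by
  obtain ⟨a, b, c, hab, hac, hbc, rfl⟩ := card_eq_three.1 hT
  have hedge : ∀ x ∈ ({a, b, c} : Finset V), ∀ y ∈ ({a, b, c} : Finset V), x ≠ y →
      {x, y} ∈ L.faces := fun x hx y hy hxy =>
    (hL _).2 <| Finset.ssubset_iff_subset_ne.2 ⟨insert_subset hx (singleton_subset_iff.2 hy),
      fun h => by simpa [h, hT] using card_pair hxy⟩
  refine hNonzero_two_of_cycle (n := 2) (c := fun i => if i = 0 then a else if i = 1 then b else c)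
    le_rfl ?_ ?_ ?_ ?_
  · intro i hi j hj
    simp only [Set.mem_Iic] at hi hj
    interval_cases i <;> interval_cases j <;>
      simp [hab, hac, hbc, Ne.symm hab, Ne.symm hac, Ne.symm hbc]
  · intro i hi
    interval_cases i
    · exact hedge a (by simp) b (by simp) hab
    · exact hedge b (by simp) c (by simp) hbc
  · exact hedge c (by simp) a (by simp) (Ne.symm hac)
  · exact fun U hU h3 => (card_lt_card ((hL U).1 hU)).ne (h3.trans hT.symm)

end Homology

variable (k : Type*) [Field k]

theorem not_hNonzero_of_card_lt_girth {p : ℕ} {W F : Finset V}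
    (hW : (W.card : ℕ∞) < K.girth k p) (hF : F ∈ K.faces) :
    ¬((K.link F).restrict W).HNonzero k p :=
  fun h => hW.not_ge (sInf_le ⟨W, ⟨F, hF, h⟩, rfl⟩)

theorem flag_of_three_lt_girth (hg : 3 < K.girth k 2) : K.Flag := by
  intro S
  induction S using Finset.strongInduction with
  | H S ih =>
  intro hS
  by_contra hSK
  have hproper : ∀ U ⊂ S, U ∈ K.faces := fun U hU =>
    ih U hU fun G hG => hS G (hG.trans hU.subset)
  have h3 : 3 ≤ S.card := by
    by_contra h
    exact hSK (hS S subset_rfl (by omega))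
  obtain ⟨T, hTS, hT⟩ := exists_subset_card_eq h3
  have hF : S \ T ∈ K.faces := hproper _ (sdiff_ssubset hTS (card_pos.1 (by omega)))
  -- the link of `S \ T`, restricted to `T`, is the boundary of the triangle `T`
  refine not_hNonzero_of_card_lt_girth k (by rwa [hT]) hF
    (hNonzero_two_of_boundary_simplex hT fun U => ⟨?_, fun hUT => ?_⟩)
  · rintro ⟨⟨-, hU⟩, hUT⟩
    refine Finset.ssubset_iff_subset_ne.2 ⟨hUT, ?_⟩
    rintro rfl
    exact hSK (by rwa [sdiff_union_of_subset hTS] at hU)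
  · refine ⟨⟨disjoint_sdiff_self_left.mono_right hUT.subset, hproper _ ?_⟩, hUT.subset⟩
    obtain ⟨z, hzT, hzU⟩ := exists_of_ssubset hUT
    refine Finset.ssubset_iff_subset_ne.2
      ⟨union_subset sdiff_subset (hUT.subset.trans hTS), fun h => ?_⟩
    have hzS : z ∈ S \ T ∪ U := by rw [h]; exact hTS hzT
    simp [hzT, hzU] at hzS

theorem skeleton_noInducedCycleUpTo (hempty : ∅ ∈ K.faces) {B : ℕ}
    (hg : (B : ℕ∞) < K.girth k 2) : K.skeleton.NoInducedCycleUpTo B := by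
  intro n c hn hnB hc
  set W := (Iic n).image c
  have hW : W.card = n + 1 := by
    rw [card_image_of_injOn (by rw [coe_Iic]; exact hc.injOn), Nat.card_Iic]
  have hcW : ∀ i ≤ n, c i ∈ W := fun i hi => mem_image_of_mem c (mem_Iic.2 hi)
  have hmem : ∀ U, U ∈ ((K.link ∅).restrict W).faces ↔ U ∈ K.faces ∧ U ⊆ W := by
    simp [link, restrict]
  refine not_hNonzero_of_card_lt_girth k (lt_of_le_of_lt (by rw [hW]; exact_mod_cast hnB) hg)
    hempty (hNonzero_two_of_cycle (by omega) hc.injOn (fun i hi => ?_) ?_ ?_)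
  · exact (hmem _).2 ⟨(hc.2.1 i hi).2, insert_subset (hcW i hi.le) (by simpa using hcW _ hi)⟩
  · exact (hmem _).2 ⟨hc.1.2, insert_subset (hcW n le_rfl) (by simpa using hcW 0 (Nat.zero_le n))⟩
  intro U hU hU3
  rw [hmem] at hU
  obtain ⟨x, y, z, hxy, hxz, hyz, rfl⟩ := card_eq_three.1 hU3
  have hidx : ∀ t ∈ ({x, y, z} : Finset V), ∃ i ≤ n, c i = t := fun t ht => by
    simpa [W] using hU.2 ht
  have hadj : ∀ s ∈ ({x, y, z} : Finset V), ∀ t ∈ ({x, y, z} : Finset V), s ≠ t →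
      K.skeleton.Adj s t := fun s hs t ht hst =>
    ⟨hst, K.down_closed hU.1 (insert_subset hs (singleton_subset_iff.2 ht))⟩
  obtain ⟨a, ha, rfl⟩ := hidx x (by simp)
  obtain ⟨b, hb, rfl⟩ := hidx y (by simp)
  obtain ⟨d, hd, rfl⟩ := hidx z (by simp)
  exact hc.not_triangle hn ha hb hd (hadj _ (by simp) _ (by simp) hxy)
    (hadj _ (by simp) _ (by simp) hyz) (hadj _ (by simp) _ (by simp) hxz)

end SC

/-- A walk of length `r` from `u` to `v` is encoded as `w : ℕ → V` with `w 0 = u`, constantly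
`v` from index `r` on. -/
theorem nrwalks_count_le_general {V : Type*} [LinearOrder V] (k : Type*) [Field k]
    (K : SC V) (d r : ℕ)
    (hdim : ∀ F ∈ K.faces, F.card ≤ d) (hdim' : ∃ F ∈ K.faces, F.card = d)
    (hg : ((2 * r : ℕ) : ℕ∞) < SC.girth k K 2) (u v : V) :
    Set.ncard {w : ℕ → V | SC.IsNRWalk K r w ∧ w 0 = u ∧ ∀ j, r ≤ j → w j = v} ≤
      (d - 1) ^ (r - 1) := by
  obtain ⟨F, hF, -⟩ := hdim'
  have hempty : ∅ ∈ K.faces := K.down_closed hF (empty_subset F)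
  refine ENat.toNat_le_of_le_natCast ?_
  rcases le_or_gt r 1 with hr | hr
  · rw [Nat.sub_eq_zero_of_le hr, pow_zero, Nat.cast_one]
    exact Set.encard_le_one_iff_subsingleton.2
      ((subsingleton_setOf_eq_of_le_one hr u v).anti fun w hw => hw.2)
  have hflag : K.Flag := SC.flag_of_three_lt_girth k (lt_of_le_of_lt (by norm_cast; omega) hg)
  have hwalks : {w : ℕ → V | SC.IsNRWalk K r w ∧ w 0 = u ∧ ∀ j, r ≤ j → w j = v} ⊆
      K.skeleton.nrWalks r u v := fun w hw => ⟨hflag.skeleton_isNRWalk hempty hw.1, hw.2⟩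
  exact (Set.encard_le_encard hwalks).trans <|
    SimpleGraph.encard_nrWalks_le (SC.skeleton_noInducedCycleUpTo k hempty hg)
      (fun _ _ => hflag.card_le_of_isClique_neighborSet hempty hdim) v r le_rfl u

/-- If `K` is `(d-1)`-dimensional with `gr_1(K) > 2r`, then
between any two given vertices there are at most `(d-1)^(r-1)` non-returning walks
of length `r` in the directed 1-skeleton.  (A walk of length `r` from `u` to `v`
is encoded as `w : ℕ → V` with `w 0 = u`, constantly `v` from index `r` on.) -/
theorem nrwalks_count_le {V : Type*} [LinearOrder V] (k : Type*) [Field k]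
    (K : SC V) (d r : ℕ) (hr : 1 ≤ r)
    (hdim : ∀ F ∈ K.faces, F.card ≤ d) (hdim' : ∃ F ∈ K.faces, F.card = d)
    (hg : ((2 * r : ℕ) : ℕ∞) < SC.girth k K 2) (u v : V) :
    Set.ncard {w : ℕ → V | SC.IsNRWalk K r w ∧ w 0 = u ∧ ∀ j, r ≤ j → w j = v} ≤
      (d - 1) ^ (r - 1) :=
  nrwalks_count_le_general k K d r hdim hdim' hg u v
end

section
/- Let Γ be a simplicial complex with finite p-girth, p ≥ 1. Then for all 0 ≤ k ≤ p, gr_{p−k}(Γ) ≤ gr_p(Γ) − k. -/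
open Finset

/-!
Fix a vertex `v` of a complex `L`. Every chain of `L` splits as `v * a + r`, where `a` is a
chain of the link `lk_L(v)` and `r` a chain of the deletion `L - v = L[V - v]`, and the cone
satisfies `∂(v * a) = a - v * ∂a`. So if `z` is a cycle of `L` that is not a boundary, either
its link part `a` is a non-bounding cycle of `lk_L(v)` one degree lower, or, writing `a = ∂c`,
the cycle `z + ∂(v * c)` of `L - v` is not a boundary. For `L = lk_K(F)[W]` and `v ∈ W` one has
`lk_L(v) = lk_K(F ∪ v)[W - v]` and `L - v = lk_K(F)[W - v]`, so induction on `|W|` gives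
`gr_{q-1}(K) + 1 ≤ gr_q(K)`; iterating this proves the theorem.
-/

namespace SC

section Unordered

variable {V : Type*}

@[ext]
theorem ext {K L : SC V} (h : K.faces = L.faces) : K = L := by
  cases K; cases L; cases h; rfl

theorem restrict_restrict (L : SC V) (S T : Set V) :
    (L.restrict S).restrict T = L.restrict (S ∩ T) := by
  ext G
  simp only [restrict, Set.mem_ofPred_eq, Set.subset_inter_iff, and_assoc]

theorem restrict_faces_subset (L : SC V) (S : Set V) : (L.restrict S).faces ⊆ L.faces :=
  fun _ hG => hG.1

variable (k : Type*) [Field k] {M L : SC V} (h : M.faces ⊆ L.faces)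

def inclFace (n : ℕ) (F : faceSet M n) : faceSet L n := ⟨F.1, h F.2.1, F.2.2⟩

noncomputable def inclChains (n : ℕ) : Chains k M n →ₗ[k] Chains k L n :=
  Finsupp.lmapDomain k k (inclFace h n)

theorem inclChains_single (n : ℕ) (F : faceSet M n) (c : k) :
    inclChains k h n (Finsupp.single F c) = Finsupp.single (inclFace h n F) c :=
  Finsupp.mapDomain_single

theorem inclChains_injective (n : ℕ) : Function.Injective (inclChains k h n) :=
  Finsupp.mapDomain_injective fun _ _ hFG => Subtype.ext (congrArg Subtype.val hFG :)

theorem inclChains_inclChains {N : SC V} (h' : L.faces ⊆ N.faces) (n : ℕ)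
    (x : Chains k M n) :
    inclChains k h' n (inclChains k h n x) = inclChains k (h.trans h') n x := by
  rw [inclChains, inclChains, inclChains, Finsupp.lmapDomain_apply, Finsupp.lmapDomain_apply,
    Finsupp.lmapDomain_apply, ← Finsupp.mapDomain_comp]
  rfl

end Unordered

variable {V : Type*} [LinearOrder V]

theorem link_link (K : SC V) {F G : Finset V} (h : Disjoint F G) :
    (K.link F).link G = K.link (F ∪ G) := by
  ext H
  simp only [link, Set.mem_ofPred_eq, disjoint_union_left, disjoint_union_right, union_assoc]
  tauto

theorem link_restrict (L : SC V) {W : Finset V} {v : V} (hv : v ∈ W) :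
    (L.restrict ↑W).link {v} = (L.link {v}).restrict ↑(W.erase v) := by
  ext G
  simp only [link, restrict, Set.mem_ofPred_eq, coe_union, coe_singleton, Set.union_subset_iff,
    Set.singleton_subset_iff, mem_coe, coe_erase, Set.subset_sdiff, disjoint_singleton_left,
    Set.disjoint_singleton_right]
  tauto

theorem link_faces_subset (L : SC V) (v : V) : (L.link {v}).faces ⊆ L.faces :=
  fun _ hG => L.down_closed hG.2 subset_union_right

theorem notMem_of_mem_link {L : SC V} {v : V} {G : Finset V} (hG : G ∈ (L.link {v}).faces) :
    v ∉ G :=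
  disjoint_singleton_left.mp hG.1

theorem link_faces_subset_restrict_compl (L : SC V) (v : V) :
    (L.link {v}).faces ⊆ (L.restrict {v}ᶜ).faces :=
  fun _ hG =>
    ⟨link_faces_subset L v hG, Set.subset_compl_singleton_iff.mpr (notMem_of_mem_link hG)⟩

theorem neg_one_pow_mul_self (R : Type*) [Monoid R] [HasDistribNeg R] (m : ℕ) :
    (-1 : R) ^ m * (-1 : R) ^ m = 1 := by
  rw [← pow_add, Even.neg_one_pow ⟨m, rfl⟩]

/-- The face `insert v (G.erase u)` occurs in `∂(v * G)` and in `v * ∂G` with opposite signs. -/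
theorem neg_one_pow_card_filter_lt_swap (R : Type*) [CommRing R] {u v : V} {G : Finset V}
    (hu : u ∈ G) (hv : v ∉ G) :
    (-1 : R) ^ #(G.filter (· < v)) * (-1 : R) ^ #((insert v G).filter (· < u)) +
      (-1 : R) ^ #(G.filter (· < u)) * (-1 : R) ^ #((G.erase u).filter (· < v)) = 0 := by
  have hne : u ≠ v := fun h => hv (h ▸ hu)
  rw [filter_insert, filter_erase]
  rcases hne.lt_or_gt with huv | hvu
  · have hu' : u ∈ G.filter (· < v) := mem_filter.mpr ⟨hu, huv⟩
    obtain ⟨m, hm⟩ := Nat.exists_eq_add_of_lt (card_pos.mpr ⟨u, hu'⟩)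
    rw [if_neg (asymm huv), card_erase_of_mem hu', hm]
    simp only [zero_add, Nat.add_sub_cancel, pow_succ]
    ring
  · have hv' : v ∉ G.filter (· < u) := fun h => hv (mem_filter.mp h).1
    have hu' : u ∉ G.filter (· < v) := fun h => asymm hvu (mem_filter.mp h).2
    rw [if_pos hvu, card_insert_of_notMem hv', erase_eq_of_notMem hu', pow_succ]
    ring

variable (k : Type*) [Field k]

theorem HNonzero.exists_vertex {L : SC V} {n : ℕ} (h : HNonzero k L (n + 1)) :
    ∃ v, {v} ∈ L.faces := by
  obtain ⟨z, -, hz⟩ := SetLike.not_le_iff_exists.mp h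
  obtain ⟨F, -⟩ := Finsupp.support_nonempty_iff.mpr
    (ne_of_mem_of_not_mem (boundaries k L (n + 1)).zero_mem hz).symm
  obtain ⟨v, hv⟩ := card_pos.mp (by rw [F.2.2]; exact n.succ_pos)
  exact ⟨v, L.down_closed F.2.1 (singleton_subset_iff.mpr hv)⟩

theorem bd_single {L : SC V} (n : ℕ) (F : faceSet L (n + 1)) (c : k) :
    bd k L n (Finsupp.single F c) = c • bdFace k L n F := by
  simp [bd, Finsupp.lsum_single, LinearMap.toSpanSingleton_apply]

theorem bd_inclChains {M L : SC V} (h : M.faces ⊆ L.faces) (n : ℕ) (x : Chains k M (n + 1)) :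
    bd k L n (inclChains k h (n + 1) x) = inclChains k h n (bd k M n x) := by
  induction x using Finsupp.induction_linear with
  | zero => simp
  | add f g hf hg => simp only [map_add, hf, hg]
  | single F c =>
    rw [inclChains_single, bd_single, bd_single, map_smul, bdFace, bdFace, map_sum]
    refine congrArg _ (sum_congr rfl fun u _ => ?_)
    rw [map_smul, inclChains_single]
    rfl

noncomputable def bdTerm (L : SC V) (n : ℕ) (F : faceSet L (n + 1)) (u : V) : Chains k L n :=
  if h : u ∈ F.1 then
    (-1 : k) ^ #(F.1.filter (· < u)) •
      Finsupp.single (⟨F.1.erase u, L.down_closed F.2.1 (erase_subset _ _),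
        by rw [card_erase_of_mem h, F.2.2]; rfl⟩ : faceSet L n) 1
  else 0

theorem bdFace_eq_sum_bdTerm (L : SC V) (n : ℕ) (F : faceSet L (n + 1)) :
    bdFace k L n F = ∑ u ∈ F.1, bdTerm k L n F u := by
  rw [bdFace, ← sum_attach F.1]
  exact sum_congr rfl fun u _ => by rw [bdTerm, dif_pos u.2]

section Vertex

variable (L : SC V) (v : V)

def coneFace (n : ℕ) (G : faceSet (L.link {v}) n) : faceSet L (n + 1) :=
  ⟨insert v G.1, by rw [insert_eq]; exact G.2.1.2,
    by rw [card_insert_of_notMem (notMem_of_mem_link G.2.1), G.2.2]⟩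

/-- The cone `a ↦ v * a`; the sign is that of `v` in the boundary of `insert v G`. -/
noncomputable def cone (n : ℕ) : Chains k (L.link {v}) n →ₗ[k] Chains k L (n + 1) :=
  Finsupp.lsum k fun G => LinearMap.toSpanSingleton k _
    ((-1 : k) ^ #(G.1.filter (· < v)) • Finsupp.single (coneFace L v n G) 1)

theorem cone_single (n : ℕ) (G : faceSet (L.link {v}) n) (c : k) :
    cone k L v n (Finsupp.single G c) =
      (c * (-1 : k) ^ #(G.1.filter (· < v))) • Finsupp.single (coneFace L v n G) 1 := by
  simp [cone, Finsupp.lsum_single, LinearMap.toSpanSingleton_apply]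

def eraseFace (n : ℕ) (F : faceSet L (n + 1)) (h : v ∈ F.1) : faceSet (L.link {v}) n :=
  ⟨F.1.erase v,
    ⟨disjoint_singleton_left.mpr (notMem_erase v F.1),
      by rw [← insert_eq, insert_erase h]; exact F.2.1⟩,
    by rw [card_erase_of_mem h, F.2.2]; rfl⟩

noncomputable def linkPart (n : ℕ) : Chains k L (n + 1) →ₗ[k] Chains k (L.link {v}) n :=
  Finsupp.lsum k fun F => LinearMap.toSpanSingleton k _
    (if h : v ∈ F.1 then
      (-1 : k) ^ #((F.1.erase v).filter (· < v)) • Finsupp.single (eraseFace L v n F h) 1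
    else 0)

theorem linkPart_single (n : ℕ) (F : faceSet L (n + 1)) (c : k) :
    linkPart k L v n (Finsupp.single F c) =
      if h : v ∈ F.1 then
        (c * (-1 : k) ^ #((F.1.erase v).filter (· < v))) •
          Finsupp.single (eraseFace L v n F h) 1
      else 0 := by
  by_cases h : v ∈ F.1 <;>
    simp [linkPart, Finsupp.lsum_single, LinearMap.toSpanSingleton_apply, h]

def deleteFace (n : ℕ) (F : faceSet L n) (h : v ∉ F.1) : faceSet (L.restrict {v}ᶜ) n :=
  ⟨F.1, ⟨F.2.1, Set.subset_compl_singleton_iff.mpr h⟩, F.2.2⟩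

noncomputable def deletePart (n : ℕ) : Chains k L n →ₗ[k] Chains k (L.restrict {v}ᶜ) n :=
  Finsupp.lsum k fun F => LinearMap.toSpanSingleton k _
    (if h : v ∈ F.1 then 0 else Finsupp.single (deleteFace L v n F h) 1)

theorem deletePart_single (n : ℕ) (F : faceSet L n) (c : k) :
    deletePart k L v n (Finsupp.single F c) =
      if h : v ∈ F.1 then 0 else Finsupp.single (deleteFace L v n F h) c := by
  by_cases h : v ∈ F.1 <;>
    simp [deletePart, Finsupp.lsum_single, LinearMap.toSpanSingleton_apply, h]

theorem cone_linkPart_add_deletePart (n : ℕ) (x : Chains k L (n + 1)) :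
    cone k L v n (linkPart k L v n x) +
      inclChains k (L.restrict_faces_subset _) (n + 1) (deletePart k L v (n + 1) x) = x := by
  induction x using Finsupp.induction_linear with
  | zero => simp
  | add f g hf hg =>
    conv_rhs => rw [← hf, ← hg]
    simp only [map_add]
    abel
  | single F c =>
    by_cases h : v ∈ F.1
    · have hF : coneFace L v n (eraseFace L v n F h) = F := Subtype.ext (insert_erase h)
      rw [linkPart_single, dif_pos h, deletePart_single, dif_pos h, map_zero, add_zero,
        map_smul, cone_single, hF, smul_smul, one_mul,
        show (eraseFace L v n F h).1 = F.1.erase v from rfl, mul_assoc, neg_one_pow_mul_self,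
        mul_one, Finsupp.smul_single_one]
    · rw [linkPart_single, dif_neg h, deletePart_single, dif_neg h, map_zero, zero_add,
        inclChains_single]
      rfl

theorem linkPart_cone (n : ℕ) (a : Chains k (L.link {v}) n) :
    linkPart k L v n (cone k L v n a) = a := by
  induction a using Finsupp.induction_linear with
  | zero => simp
  | add f g hf hg => simp only [map_add, hf, hg]
  | single G c =>
    have hv : v ∉ G.1 := notMem_of_mem_link G.2.1
    have hmem : v ∈ (coneFace L v n G).1 := mem_insert_self v G.1
    have hG : eraseFace L v n (coneFace L v n G) hmem = G := Subtype.ext (erase_insert hv)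
    rw [cone_single, map_smul, linkPart_single, dif_pos hmem, hG,
      show (coneFace L v n G).1.erase v = G.1 from erase_insert hv, smul_smul, one_mul,
      mul_assoc, neg_one_pow_mul_self, mul_one, Finsupp.smul_single_one]

theorem linkPart_inclChains {M : SC V} (h : M.faces ⊆ L.faces) (hM : ∀ F ∈ M.faces, v ∉ F)
    (n : ℕ) (x : Chains k M (n + 1)) :
    linkPart k L v n (inclChains k h (n + 1) x) = 0 := by
  induction x using Finsupp.induction_linear with
  | zero => simp
  | add f g hf hg => simp only [map_add, hf, hg, add_zero]
  | single F c =>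
    rw [inclChains_single, linkPart_single,
      dif_neg (show v ∉ (inclFace h (n + 1) F).1 from hM F.1 F.2.1)]

theorem bdTerm_coneFace_self (n : ℕ) (G : faceSet (L.link {v}) (n + 1)) :
    bdTerm k L (n + 1) (coneFace L v (n + 1) G) v =
      (-1 : k) ^ #(G.1.filter (· < v)) •
        Finsupp.single (inclFace (link_faces_subset L v) (n + 1) G) 1 := by
  have hv : v ∉ G.1 := notMem_of_mem_link G.2.1
  rw [bdTerm, dif_pos (show v ∈ (coneFace L v (n + 1) G).1 from mem_insert_self v G.1)]
  have hsign : #((coneFace L v (n + 1) G).1.filter (· < v)) = #(G.1.filter (· < v)) := by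
    rw [show (coneFace L v (n + 1) G).1 = insert v G.1 from rfl, filter_insert,
      if_neg (lt_irrefl v)]
  rw [hsign]
  exact congrArg _ (congrArg (Finsupp.single · (1 : k)) (Subtype.ext (erase_insert hv)))

theorem bdTerm_coneFace_add_cone_bdTerm (n : ℕ) (G : faceSet (L.link {v}) (n + 1)) {u : V}
    (hu : u ∈ G.1) :
    (-1 : k) ^ #(G.1.filter (· < v)) • bdTerm k L (n + 1) (coneFace L v (n + 1) G) u +
      cone k L v n (bdTerm k (L.link {v}) n G u) = 0 := by
  have hv : v ∉ G.1 := notMem_of_mem_link G.2.1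
  have hmem : u ∈ (coneFace L v (n + 1) G).1 := mem_insert_of_mem hu
  rw [bdTerm, dif_pos hmem, bdTerm, dif_pos hu, map_smul, cone_single, smul_smul, smul_smul,
    one_mul]
  have hsingle : ∀ (X Y : faceSet L (n + 1)) (a b : k), X.1 = Y.1 → a + b = 0 →
      a • Finsupp.single X (1 : k) + b • Finsupp.single Y 1 = 0 := by
    rintro X Y a b hXY hab
    rw [Subtype.ext hXY, ← add_smul, hab, zero_smul]
  exact hsingle _ _ _ _ (erase_insert_of_ne fun h => hv (h ▸ hu))
    (neg_one_pow_card_filter_lt_swap k hu hv)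

theorem bd_cone (n : ℕ) (a : Chains k (L.link {v}) (n + 1)) :
    bd k L (n + 1) (cone k L v (n + 1) a) =
      inclChains k (link_faces_subset L v) (n + 1) a - cone k L v n (bd k (L.link {v}) n a) := by
  induction a using Finsupp.induction_linear with
  | zero => simp
  | add f g hf hg => simp only [map_add, hf, hg]; abel
  | single G c =>
    have hsplit : bdFace k L (n + 1) (coneFace L v (n + 1) G) =
        bdTerm k L (n + 1) (coneFace L v (n + 1) G) v +
          ∑ u ∈ G.1, bdTerm k L (n + 1) (coneFace L v (n + 1) G) u := by
      rw [bdFace_eq_sum_bdTerm]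
      exact sum_insert (notMem_of_mem_link G.2.1)
    have hcancel : (-1 : k) ^ #(G.1.filter (· < v)) •
          ∑ u ∈ G.1, bdTerm k L (n + 1) (coneFace L v (n + 1) G) u +
        ∑ u ∈ G.1, cone k L v n (bdTerm k (L.link {v}) n G u) = 0 := by
      rw [smul_sum, ← sum_add_distrib]
      exact sum_eq_zero fun u hu => bdTerm_coneFace_add_cone_bdTerm k L v n G hu
    rw [cone_single, map_smul, bd_single, one_smul, hsplit, bdTerm_coneFace_self,
      inclChains_single, bd_single, map_smul, bdFace_eq_sum_bdTerm, map_sum, smul_add, smul_smul,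
      mul_assoc, neg_one_pow_mul_self, mul_one, Finsupp.smul_single_one, mul_smul]
    linear_combination (norm := module) c • hcancel

theorem linkPart_bd (n : ℕ) (x : Chains k L (n + 2)) :
    linkPart k L v n (bd k L (n + 1) x) = -bd k (L.link {v}) n (linkPart k L v (n + 1) x) := by
  conv_lhs => rw [← cone_linkPart_add_deletePart k L v (n + 1) x]
  rw [map_add, bd_cone, bd_inclChains, map_add, map_sub, linkPart_cone,
    linkPart_inclChains k L v _ (fun _ => notMem_of_mem_link),
    linkPart_inclChains k L v (L.restrict_faces_subset _)
      (fun _ hF => Set.subset_compl_singleton_iff.mp hF.2)]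
  abel

theorem HNonzero.restrict_compl_or_link {n : ℕ} (h : HNonzero k L (n + 2)) :
    HNonzero k (L.restrict {v}ᶜ) (n + 2) ∨ HNonzero k (L.link {v}) (n + 1) := by
  rw [HNonzero, HNonzero, ← not_and_or]
  rintro ⟨hdel, hlink⟩
  refine h fun z (hz : bd k L (n + 1) z = 0) => ?_
  set a := linkPart k L v (n + 1) z
  set r := deletePart k L v (n + 2) z
  have hz_eq : cone k L v (n + 1) a + inclChains k (L.restrict_faces_subset _) (n + 2) r = z :=
    cone_linkPart_add_deletePart k L v (n + 1) z
  have ha : bd k (L.link {v}) n a = 0 := by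
    rw [← neg_eq_zero, ← linkPart_bd, hz, map_zero]
  obtain ⟨c, hc⟩ := hlink ha
  have hr : bd k L (n + 1) (inclChains k (L.restrict_faces_subset _) (n + 2) r) =
      -inclChains k (link_faces_subset L v) (n + 1) a := by
    rw [← hz_eq, map_add, bd_cone, ha, map_zero, sub_zero] at hz
    exact eq_neg_of_add_eq_zero_right hz
  -- `z + ∂(v * c)` is the cycle `r + c` of the deletion
  obtain ⟨d, hd⟩ :=
    hdel (x := r + inclChains k (link_faces_subset_restrict_compl L v) (n + 2) c) <| by
      show bd k _ (n + 1) _ = 0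
      apply inclChains_injective k (L.restrict_faces_subset _)
      rw [← bd_inclChains, map_add, inclChains_inclChains, map_add, hr, bd_inclChains, hc,
        map_zero]
      abel
  refine ⟨inclChains k (L.restrict_faces_subset _) (n + 3) d - cone k L v (n + 2) c, ?_⟩
  rw [map_sub, bd_inclChains, hd, bd_cone, hc, map_add, inclChains_inclChains, ← hz_eq]
  abel

end Vertex

theorem girth_le_card {K : SC V} {p : ℕ} {F W : Finset V} (hF : F ∈ K.faces)
    (h : HNonzero k ((K.link F).restrict ↑W) p) : girth k K p ≤ W.card :=
  sInf_le ⟨W, ⟨F, hF, h⟩, rfl⟩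

theorem girth_add_one_le_card (K : SC V) (n : ℕ) {F : Finset V} (W : Finset V)
    (h : HNonzero k ((K.link F).restrict ↑W) (n + 2)) : girth k K (n + 1) + 1 ≤ W.card := by
  induction W using Finset.strongInduction with
  | H W ih =>
  obtain ⟨v, ⟨hFv, hvK⟩, hvW⟩ := h.exists_vertex
  replace hvW : v ∈ W := by simpa using hvW
  rcases HNonzero.restrict_compl_or_link k _ v h with hdel | hlink
  · rw [restrict_restrict, ← Set.sdiff_eq, ← coe_erase] at hdel
    calc girth k K (n + 1) + 1 ≤ (W.erase v).card := ih _ (erase_ssubset hvW) hdel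
      _ ≤ W.card := by gcongr; exact erase_subset v W
  · rw [link_restrict _ hvW, link_link _ hFv] at hlink
    calc girth k K (n + 1) + 1 ≤ (W.erase v).card + 1 := by
          gcongr; exact girth_le_card k hvK hlink
      _ = W.card := by exact_mod_cast card_erase_add_one hvW

theorem girth_add_one_le (K : SC V) (n : ℕ) : girth k K (n + 1) + 1 ≤ girth k K (n + 2) :=
  le_sInf <| by
    rintro _ ⟨W, ⟨F, -, h⟩, rfl⟩
    exact girth_add_one_le_card k K n W h

theorem girth_add_le (K : SC V) (n j : ℕ) : girth k K (n + 1) + j ≤ girth k K (n + j + 1) := by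
  induction j with
  | zero => simp
  | succ j ih =>
    calc girth k K (n + 1) + ↑(j + 1) = girth k K (n + 1) + j + 1 := by push_cast; rw [add_assoc]
      _ ≤ girth k K (n + j + 1) + 1 := by gcongr
      _ ≤ girth k K (n + (j + 1) + 1) := girth_add_one_le k K (n + j)

end SC

theorem girth_sub_le_general {V : Type*} [LinearOrder V] (k : Type*) [Field k]
    (K : SC V) (p : ℕ) :
    ∀ j ≤ p, SC.girth k K (p + 1 - j) ≤ SC.girth k K (p + 1) - (j : ℕ∞) := by
  intro j hj
  obtain ⟨n, rfl⟩ := Nat.exists_eq_add_of_le' hj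
  rw [show n + j + 1 - j = n + 1 by omega]
  exact (ENat.addLECancellable_natCast j).le_tsub_of_add_le_right (SC.girth_add_le k K n j)

/-- If `gr_p(K) < ∞` and `p ≥ 1`, then for all `0 ≤ j ≤ p`,
`gr_{p-j}(K) ≤ gr_p(K) - j`.  (Here `SC.girth k K (q+1)` is `gr_q(K)`.) -/
theorem girth_sub_le {V : Type*} [LinearOrder V] (k : Type*) [Field k]
    (K : SC V) (p : ℕ) (hp : 1 ≤ p) (hfin : SC.girth k K (p + 1) ≠ ⊤) :
    ∀ j ≤ p, SC.girth k K (p + 1 - j) ≤ SC.girth k K (p + 1) - (j : ℕ∞) :=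
  girth_sub_le_general k K p
end

section
/- Define recursively a_{2,r,i} := 1 + 1/r + … + 1/r^{i−1} = (r^i − 1)/(r^i − r^{i−1}), a_{p,r,p−1} := p−1, and a_{p,r,i} := (1/2)a_{p−1,r,i−1} + (1/2)a_{p,r,i−1} + 1 for p ≥ 3, i ≥ p. Then for all p ≥ 3, r ≥ 2, i ≥ p: a_{p,r,i} > a_{p−1,r,i}, a_{p,r,i} > a_{p,r,i−1}, a_{p,r,i} > a_{p,r+1,i}, and a_{p,r,i} < 2p − 3 + 1/(r−1). -/
/-- The exponents `a_{p,r,i}` of the paper: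
`a_{2,r,i} = 1 + 1/r + … + 1/r^{i-1}`, `a_{p,r,i} = p - 1` for `i ≤ p - 1`, and
`a_{p,r,i} = (1/2) a_{p-1,r,i-1} + (1/2) a_{p,r,i-1} + 1` for `p ≥ 3`, `i ≥ p`. -/
noncomputable def aP : ℕ → ℕ → ℕ → ℝ
  | 0, _, _ => 0
  | 1, _, _ => 0
  | 2, r, i => ∑ j ∈ Finset.range i, ((r : ℝ)⁻¹) ^ j
  | (q + 3), r, i =>
      if h : i ≤ q + 2 then ((q : ℝ) + 2)
      else (aP (q + 2) r (i - 1)) / 2 + (aP (q + 3) r (i - 1)) / 2 + 1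
  termination_by p _ i => (p, i)
  decreasing_by
    · exact Prod.Lex.left _ _ (by omega)
    · exact Prod.Lex.right _ (by omega)

lemma aP_one (r i : ℕ) : aP 1 r i = 0 := by simp [aP]

lemma aP_two (r i : ℕ) : aP 2 r i = ∑ j ∈ Finset.range i, ((r : ℝ)⁻¹) ^ j := by simp [aP]

lemma aP_base (q r i : ℕ) (h : i ≤ q + 2) : aP (q+3) r i = (q:ℝ) + 2 := by
  rw [aP]; simp [h]

lemma aP_succ (q r j : ℕ) (h : q + 2 ≤ j) : aP (q+3) r (j+1) =
    aP (q+2) r j / 2 + aP (q+3) r j / 2 + 1 := by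
  rw [aP]; simp [show ¬ (j+1 ≤ q+2) by omega]

lemma aP_geom_le (x : ℝ) (h0 : 0 ≤ x) (h : x ≤ 1/2) (k : ℕ) :
    (∑ j ∈ Finset.range k, x^j) + 2*x^k ≤ 2 := by
  induction k with
  | zero => simp
  | succ k ih =>
    rw [Finset.sum_range_succ, pow_succ]
    nlinarith [pow_nonneg h0 k]

lemma geom_bound (r k : ℕ) (hr : 2 ≤ r) :
    ∑ j ∈ Finset.range k, ((r:ℝ)⁻¹)^j < 1 + 1/((r:ℝ)-1) := by
  have hR : (2:ℝ) ≤ r := by exact_mod_cast hr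
  have hx0 : (0:ℝ) < (r:ℝ)⁻¹ := by positivity
  have hx2 : (r:ℝ)⁻¹ ≤ 1/2 := by
    rw [inv_le_comm₀ (by linarith) (by norm_num)]; linarith
  have hx : (r:ℝ)⁻¹ ≠ 1 := ne_of_lt (lt_of_le_of_lt hx2 (by norm_num))
  rw [geom_sum_eq hx]
  rw [div_lt_iff_of_neg (by linarith)]
  have hne : (r:ℝ) - 1 ≠ 0 := ne_of_gt (by linarith)
  have h1 : (1 + 1/((r:ℝ)-1)) * ((r:ℝ)⁻¹ - 1) = -1 := by
    have hr0 : (r:ℝ) ≠ 0 := by intro h; rw [h] at hR; norm_num at hR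
    field_simp
    ring
  have h2 := pow_pos hx0 k
  linarith

lemma aP_diag (q r : ℕ) : aP (q+2) r (q+1) = (q:ℝ) + 1 := by
  match q with
  | 0 => rw [aP_two]; norm_num
  | (q'+1) =>
    rw [show q'+1+2 = q'+3 from rfl, aP_base q' r (q'+2) le_rfl]
    push_cast; ring

lemma aP_lt : ∀ (i p r : ℕ), 2 ≤ r → 1 ≤ p → p ≤ i → aP p r i < i := by
  intro i
  induction i using Nat.strong_induction_on with
  | _ i IH =>
    intro p r hr hp hpi
    have hR : (2:ℝ) ≤ r := by exact_mod_cast hr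
    have hx0 : (0:ℝ) ≤ (r:ℝ)⁻¹ := by positivity
    have hx2 : (r:ℝ)⁻¹ ≤ 1/2 := by
      rw [inv_le_comm₀ (by linarith) (by norm_num)]; linarith
    match p, hp with
    | 1, _ =>
      rw [aP_one]; exact_mod_cast Nat.lt_of_lt_of_le Nat.zero_lt_one hpi
    | 2, _ =>
      rw [aP_two]
      have h1 := aP_geom_le ((r:ℝ)⁻¹) hx0 hx2 i
      have h2 : (0:ℝ) < ((r:ℝ)⁻¹)^i := by positivity
      have h3 : (2:ℝ) ≤ i := by exact_mod_cast hpi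
      linarith
    | (q+3), _ =>
      match i, hpi with
      | (j+1), hpi =>
        have hj : q + 2 ≤ j := by omega
        rw [aP_succ q r j hj]
        have h1 : aP (q+2) r j < j := IH j (by omega) (q+2) r hr (by omega) hj
        have h2 : aP (q+3) r j ≤ j := by
          by_cases hc : j = q + 2
          · subst hc; rw [aP_base q r (q+2) le_rfl]; push_cast; linarith
          · exact le_of_lt (IH j (by omega) (q+3) r hr (by omega) (by omega))
        push_cast
        linarith

lemma aP2_pseudo (r j : ℕ) (hr : 2 ≤ r) : aP 2 r (j+1) ≤ aP 2 r j / 2 + 1 := by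
  have hR : (2:ℝ) ≤ r := by exact_mod_cast hr
  have hx0 : (0:ℝ) ≤ (r:ℝ)⁻¹ := by positivity
  have hx2 : (r:ℝ)⁻¹ ≤ 1/2 := by
    rw [inv_le_comm₀ (by linarith) (by norm_num)]; linarith
  rw [aP_two, aP_two, Finset.sum_range_succ]
  have := aP_geom_le ((r:ℝ)⁻¹) hx0 hx2 j
  linarith

lemma master : ∀ (i p r : ℕ), 2 ≤ p → 2 ≤ r → p ≤ i →
    aP (p-1) r i < aP p r i ∧ aP p r (i-1) < aP p r i ∧
    aP p (r+1) i < aP p r i ∧ aP p r i < 2*p - 3 + 1/((r:ℝ)-1) := by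
  intro i
  induction i using Nat.strong_induction_on with
  | _ i IH =>
    intro p r hp hr hpi
    have hR : (2:ℝ) ≤ r := by exact_mod_cast hr
    have hx0 : (0:ℝ) < (r:ℝ)⁻¹ := by positivity
    have hs : (0:ℝ) < 1/((r:ℝ)-1) := by
      apply div_pos one_pos; linarith
    match p, hp with
    | 2, _ =>
      refine ⟨?_, ?_, ?_, ?_⟩
      · rw [aP_one, aP_two]
        exact Finset.sum_pos (fun j _ => pow_pos hx0 j)
          (Finset.nonempty_range_iff.mpr (by omega))
      · match i, hpi with
        | (k+1), _ =>
          rw [aP_two, aP_two, show k+1-1 = k from rfl, Finset.sum_range_succ]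
          have := pow_pos hx0 k
          linarith
      · rw [aP_two, aP_two]
        apply Finset.sum_lt_sum
        · intro j _
          apply pow_le_pow_left₀ (by positivity)
          apply inv_anti₀ (by positivity)
          push_cast; linarith
        · refine ⟨1, Finset.mem_range.mpr (by omega), ?_⟩
          simp only [pow_one]
          apply inv_strictAnti₀ (by positivity)
          push_cast; linarith
      · rw [aP_two]
        have := geom_bound r i hr
        push_cast
        linarith
    | (q+3), _ =>
      match i, hpi with
      | (j+1), hpi =>
        have hj : q + 2 ≤ j := by omega
        have hrec := aP_succ q r j hj
        have hsub : aP (q+2) r (j+1) ≤ aP (q+1) r j / 2 + aP (q+2) r j / 2 + 1 := by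
          match q with
          | 0 =>
            rw [aP_one]
            have := aP2_pseudo r j hr
            linarith
          | (q'+1) =>
            rw [show q'+1+2 = q'+3 from rfl, aP_succ q' r j (by omega)]
        refine ⟨?_, ?_, ?_, ?_⟩
        · -- aP (q+2) r (j+1) < aP (q+3) r (j+1)
          show aP (q+2) r (j+1) < aP (q+3) r (j+1)
          rw [hrec]
          have key : aP (q+1) r j < aP (q+3) r j := by
            by_cases hc : j = q + 2
            · subst hc
              rw [aP_base q r (q+2) le_rfl]
              have h1 : aP (q+1) r (q+2) < ((q+2 : ℕ) : ℝ) :=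
                aP_lt (q+2) (q+1) r hr (by omega) (by omega)
              push_cast at h1 ⊢
              linarith
            · have h1 := (IH j (by omega) (q+2) r (by omega) hr (by omega)).1
              have h2 := (IH j (by omega) (q+3) r (by omega) hr (by omega)).1
              have e1 : q+2-1 = q+1 := rfl
              have e2 : q+3-1 = q+2 := rfl
              rw [e1] at h1
              rw [e2] at h2
              linarith
          linarith
        · -- aP (q+3) r j < aP (q+3) r (j+1)
          show aP (q+3) r j < aP (q+3) r (j+1)
          by_cases hc : j = q + 2
          · subst hc
            rw [hrec, aP_base q r (q+2) le_rfl]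
            have h1 := (IH (q+2) (by omega) (q+2) r (by omega) hr le_rfl).2.1
            have hd := aP_diag q r
            have e1 : q+2-1 = q+1 := rfl
            rw [e1] at h1
            linarith
          · obtain ⟨j', rfl⟩ : ∃ j', j = j' + 1 := ⟨j-1, by omega⟩
            have hj' : q + 2 ≤ j' := by omega
            have e2 := aP_succ q r j' hj'
            have h1 := (IH (j'+1) (by omega) (q+2) r (by omega) hr (by omega)).2.1
            have h2 := (IH (j'+1) (by omega) (q+3) r (by omega) hr (by omega)).2.1
            have e1 : j'+1-1 = j' := rfl
            rw [e1] at h1 h2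
            linarith [hrec, e2, h1, h2]
        · -- aP (q+3) (r+1) (j+1) < aP (q+3) r (j+1)
          rw [hrec, aP_succ q (r+1) j hj]
          have h1 := (IH j (by omega) (q+2) r (by omega) hr hj).2.2.1
          have h2 : aP (q+3) (r+1) j ≤ aP (q+3) r j := by
            by_cases hc : j = q + 2
            · subst hc
              rw [aP_base q (r+1) (q+2) le_rfl, aP_base q r (q+2) le_rfl]
            · exact le_of_lt (IH j (by omega) (q+3) r (by omega) hr (by omega)).2.2.1
          linarith
        · -- bound
          rw [hrec]
          have h1 := (IH j (by omega) (q+2) r (by omega) hr hj).2.2.2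
          have h2 : aP (q+3) r j < 2*((q:ℝ)+3) - 3 + 1/((r:ℝ)-1) := by
            by_cases hc : j = q + 2
            · subst hc; rw [aP_base q r (q+2) le_rfl]; linarith
            · have := (IH j (by omega) (q+3) r (by omega) hr (by omega)).2.2.2
              push_cast at this ⊢; linarith
          push_cast at h1 h2 ⊢
          linarith

/-- For all `p ≥ 3`, `r ≥ 2`, `i ≥ p`:
`a_{p,r,i} > a_{p-1,r,i}`, `a_{p,r,i} > a_{p,r,i-1}`, `a_{p,r,i} > a_{p,r+1,i}`,
and `a_{p,r,i} < 2p - 3 + 1/(r-1)`. -/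
theorem aP_inequalities (p r i : ℕ) (hp : 3 ≤ p) (hr : 2 ≤ r) (hi : p ≤ i) :
    aP (p - 1) r i < aP p r i ∧
    aP p r (i - 1) < aP p r i ∧
    aP p (r + 1) i < aP p r i ∧
    aP p r i < 2 * p - 3 + 1 / ((r : ℝ) - 1) := by
  exact master i p r (by omega) hr hi
end

section
/- With a_{p,r,i} defined as before, for all p ≥ 3 and r ≥ 2, the limit of a_{p,r,i} as i → ∞ equals 2p − 3 + 1/(r−1). -/
open Filter


lemma aux_rec (x b : ℕ → ℝ) (L : ℝ) (N0 : ℕ)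
    (hb : Tendsto b atTop (nhds L))
    (hrec : ∀ i, N0 ≤ i → x (i+1) = b i / 2 + x i / 2 + 1) :
    Tendsto x atTop (nhds (L + 2)) := by
  rw [Metric.tendsto_atTop] at hb ⊢
  intro ε hε
  obtain ⟨N1, hN1⟩ := hb (ε/4) (by linarith)
  set N := max N0 N1 with hN
  set c := |x N - (L+2)| with hc
  have key : ∀ k, |x (N+k) - (L+2)| ≤ c / 2^k + ε/4 := by
    intro k
    induction k with
    | zero => simp [hc]; positivity
    | succ k ih =>
      have hr := hrec (N+k) (le_trans (le_max_left _ _) (Nat.le_add_right _ _))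
      have hb' := hN1 (N+k) (le_trans (le_max_right _ _) (Nat.le_add_right _ _))
      rw [Real.dist_eq] at hb'
      have heq : x (N+(k+1)) - (L+2) = (x (N+k) - (L+2))/2 + (b (N+k) - L)/2 := by
        rw [show N+(k+1) = (N+k)+1 from rfl, hr]; ring
      rw [heq]
      calc |(x (N+k) - (L+2))/2 + (b (N+k) - L)/2|
          ≤ |x (N+k) - (L+2)|/2 + |b (N+k) - L|/2 := by
            calc _ ≤ |(x (N+k) - (L+2))/2| + |(b (N+k) - L)/2| := abs_add_le _ _
            _ = _ := by rw [abs_div, abs_div]; norm_num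
        _ ≤ (c / 2^k + ε/4)/2 + (ε/4)/2 := by
            gcongr
        _ ≤ c / 2^(k+1) + ε/4 := le_of_eq (by rw [pow_succ]; field_simp; ring)
  -- choose K with c / 2^K < ε/2
  have htend : Tendsto (fun k : ℕ => c / 2^k) atTop (nhds 0) := by
    simpa [div_eq_mul_inv, inv_pow] using
      (tendsto_pow_atTop_nhds_zero_of_lt_one (by norm_num : (0:ℝ) ≤ 2⁻¹)
        (by norm_num : (2:ℝ)⁻¹ < 1)).const_mul c
  obtain ⟨K, hK⟩ := (Metric.tendsto_atTop.mp htend) (ε/2) (by linarith)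
  refine ⟨N + K, fun n hn => ?_⟩
  obtain ⟨k, rfl⟩ : ∃ k, n = N + k := ⟨n - N, by omega⟩
  have hk : K ≤ k := by omega
  have h1 : c / 2^k ≤ c / 2^K := by
    apply div_le_div_of_nonneg_left ?_ (by positivity) ?_
    · exact abs_nonneg _
    · exact pow_le_pow_right₀ (by norm_num) hk
  have h2 := hK K le_rfl
  rw [Real.dist_eq] at h2 ⊢
  have h3 : |c / 2^K - 0| = c / 2^K := by
    rw [sub_zero, abs_of_nonneg (by positivity)]
  rw [h3] at h2
  calc |x (N+k) - (L+2)| ≤ c / 2^k + ε/4 := key k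
    _ ≤ c / 2^K + ε/4 := by linarith
    _ < ε := by linarith

lemma base2 (r : ℕ) (hr : 2 ≤ r) :
    Tendsto (fun i : ℕ => aP 2 r i) atTop (nhds (2 * 2 - 3 + 1 / ((r : ℝ) - 1))) := by
  have hr1 : (1:ℝ) < r := by exact_mod_cast by omega
  have hlt : |(r:ℝ)⁻¹| < 1 := by
    rw [abs_of_nonneg (by positivity)]
    exact inv_lt_one_of_one_lt₀ hr1
  have hs := (hasSum_geometric_of_abs_lt_one hlt).tendsto_sum_nat
  have : (1 - (r:ℝ)⁻¹)⁻¹ = 2 * 2 - 3 + 1 / ((r : ℝ) - 1) := by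
    have h0 : (r:ℝ) ≠ 0 := by positivity
    have h1 : (r:ℝ) - 1 ≠ 0 := by intro h; nlinarith
    field_simp
    ring
  rw [this] at hs
  convert hs using 2 with i
  simp [aP]

lemma main (p r : ℕ) (hp : 2 ≤ p) (hr : 2 ≤ r) :
    Tendsto (fun i : ℕ => aP p r i) atTop
      (nhds (2 * p - 3 + 1 / ((r : ℝ) - 1))) := by
  induction p with
  | zero => omega
  | succ p ih =>
    rcases Nat.lt_or_ge p 2 with h | h
    · interval_cases p
      · omega
      · exact_mod_cast base2 r hr
    · obtain ⟨q, rfl⟩ : ∃ q, p = q + 2 := ⟨p - 2, by omega⟩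
      have hIH : Tendsto (fun i : ℕ => aP (q+2) r i) atTop
          (nhds (2 * ((q:ℝ)+2) - 3 + 1 / ((r : ℝ) - 1))) := by
        convert ih h using 2; push_cast; ring
      have hrec : ∀ i, q + 2 ≤ i →
          aP (q+3) r (i+1) = aP (q+2) r i / 2 + aP (q+3) r i / 2 + 1 := by
        intro i hi
        rw [show aP (q+3) r (i+1) = if h : i + 1 ≤ q + 2 then ((q : ℝ) + 2)
            else (aP (q + 2) r (i+1 - 1)) / 2 + (aP (q + 3) r (i+1 - 1)) / 2 + 1
          from by rw [aP]]
        rw [dif_neg (by omega)]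
        simp
      have := aux_rec (fun i => aP (q+3) r i) (fun i => aP (q+2) r i)
        (2 * (q+2) - 3 + 1 / ((r : ℝ) - 1)) (q+2) hIH hrec
      convert this using 2
      push_cast
      ring


/-- For all `p ≥ 3` and `r ≥ 2`,
`a_{p,r,i} → 2p - 3 + 1/(r-1)` as `i → ∞`. -/
theorem aP_tendsto (p r : ℕ) (hp : 3 ≤ p) (hr : 2 ≤ r) :
    Filter.Tendsto (fun i : ℕ => aP p r i) Filter.atTop
      (nhds (2 * p - 3 + 1 / ((r : ℝ) - 1))) := by
  exact main p r (by omega) hr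
end
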